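/- arXiv:2407.01019 — 4 statements merged into one kernel-verified Lean document; each statement's English description precedes it below -/
import Mathlib

section
/- Assume (∇V(y) = 0 ⟹ F(y) = 0) for all y, and assume that for every y* ∈ Z there exist a neighborhood U of y*, constants γ ≥ 0, α₁ ∈ (0,1), c > 0, c₁ > 0 such that (i) V̇(y) ≤ −c·‖∇V(y)‖^γ·‖F(y)‖ for all y ∈ U, (ii) ‖∇V(y)‖ ≥ c₁·(V(y) − V(y*))^{1−α₁} for all y ∈ U, and (iii) γ(1−α₁) < 1. Then every bounded sequence (y_n) generated by the LCR algorithm or by the LCM algorithm converges to some point y* ∈ Z. -/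
open Filter

/-- The Lyapunov derivative `V̇(y) = ⟪∇V(y), F(y)⟫`. -/
noncomputable def lyapDeriv {m : ℕ}
    (F : EuclideanSpace ℝ (Fin m) → EuclideanSpace ℝ (Fin m))
    (V : EuclideanSpace ℝ (Fin m) → ℝ) (y : EuclideanSpace ℝ (Fin m)) : ℝ :=
  inner ℝ (gradient V y) (F y)

/-- `f(y,η) = V(y + η F(y)) − V(y) − λ η V̇(y)`. -/
noncomputable def armijoGap {m : ℕ}
    (F : EuclideanSpace ℝ (Fin m) → EuclideanSpace ℝ (Fin m))
    (V : EuclideanSpace ℝ (Fin m) → ℝ) (lam : ℝ)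
    (y : EuclideanSpace ℝ (Fin m)) (η : ℝ) : ℝ :=
  V (y + η • F y) - V y - lam * η * lyapDeriv F V y

/-- The LCR algorithm. -/
def IsLCR {m : ℕ}
    (F : EuclideanSpace ℝ (Fin m) → EuclideanSpace ℝ (Fin m))
    (V : EuclideanSpace ℝ (Fin m) → ℝ) (lam ηinit f1 : ℝ)
    (y : ℕ → EuclideanSpace ℝ (Fin m)) (η : ℕ → ℝ) : Prop :=
  ∀ n, y (n + 1) = y n + η n • F (y n) ∧
    ∃ p : ℕ, η n = ηinit / f1 ^ p ∧
      armijoGap F V lam (y n) (η n) ≤ 0 ∧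
      ∀ k < p, ¬ armijoGap F V lam (y n) (ηinit / f1 ^ k) ≤ 0

/-- The LCM algorithm (convention `η_{-1} = η_init / f2`). -/
def IsLCM {m : ℕ}
    (F : EuclideanSpace ℝ (Fin m) → EuclideanSpace ℝ (Fin m))
    (V : EuclideanSpace ℝ (Fin m) → ℝ) (lam ηinit f1 f2 : ℝ)
    (y : ℕ → EuclideanSpace ℝ (Fin m)) (η : ℕ → ℝ) : Prop :=
  ∀ n, y (n + 1) = y n + η n • F (y n) ∧
    ∃ p : ℕ, η n = (if n = 0 then ηinit else f2 * η (n - 1)) / f1 ^ p ∧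
      armijoGap F V lam (y n) (η n) ≤ 0 ∧
      ∀ k < p, ¬ armijoGap F V lam (y n) ((if n = 0 then ηinit else f2 * η (n - 1)) / f1 ^ k) ≤ 0


/-!
Armijo's condition gives `V (y (n+1)) ≤ V (y n) + λ η_n V̇(y_n)`, so `V ∘ y` decreases to
`V y*` for any cluster point `y*`, and `η_n V̇(y_n) → 0`.

If `V̇(y*) < 0`, the Armijo test accepts every small step near `y*`. A small accepted step near
`y*` must then have been grown by `f2` from a smaller previous step; walking back, the steps
shrink geometrically, so the whole past stays near `y*` down to `η_0 = η_init`, which is absurd.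
Hence steps near `y*` are bounded below, contradicting `η_n V̇(y_n) → 0`; so `y* ∈ Z`.

Near `y* ∈ Z`, (i) and (ii) together with the concavity of `s ↦ s ^ (1 - μ)`,
`μ = γ (1 - α₁)`, bound each step length by a multiple of the decrease of
`(V(y_n) - V(y*)) ^ (1 - μ)`. Once the sequence is close to `y*` with a small gap
`V(y_n) - V(y*)`, its remaining length is smaller than the distance to the boundary of the
neighbourhood, so it never leaves and converges to `y*`.
-/

open Metric Topology

section Calculus

variable {E G : Type*} [NormedAddCommGroup E] [NormedSpace ℝ E]
  [NormedAddCommGroup G] [NormedSpace ℝ G]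

theorem exists_ball_norm_sub_sub_fderiv_le {f : E → G} (hf : ContDiff ℝ 1 f) (x₀ : E)
    {κ : ℝ} (hκ : 0 < κ) :
    ∃ R > 0, ∀ x ∈ ball x₀ R, ∀ x' ∈ ball x₀ R,
      ‖f x' - f x - fderiv ℝ f x (x' - x)‖ ≤ κ * ‖x' - x‖ := by
  obtain ⟨R, hR, hclose⟩ := Metric.continuousAt_iff.1
    ((hf.continuous_fderiv one_ne_zero).continuousAt (x := x₀)) (κ / 2) (half_pos hκ)
  refine ⟨R, hR, fun x hx x' hx' => ?_⟩
  refine (convex_ball x₀ R).norm_image_sub_le_of_norm_fderiv_le'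
    (fun z _ => hf.differentiable one_ne_zero z) (fun z hz => ?_) hx hx'
  calc ‖fderiv ℝ f z - fderiv ℝ f x‖ = dist (fderiv ℝ f z) (fderiv ℝ f x) :=
        (dist_eq_norm _ _).symm
    _ ≤ dist (fderiv ℝ f z) (fderiv ℝ f x₀) + dist (fderiv ℝ f x) (fderiv ℝ f x₀) :=
        dist_triangle_right _ _ _
    _ ≤ κ / 2 + κ / 2 := add_le_add (hclose hz).le (hclose hx).le
    _ = κ := add_halves κ

end Calculus

theorem one_sub_mul_sub_le_rpow_mul_sub_rpow {a b μ : ℝ} (hb : 0 ≤ b) (hba : b ≤ a)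
    (hμ₀ : 0 ≤ μ) (hμ₁ : μ < 1) :
    (1 - μ) * (a - b) ≤ a ^ μ * (a ^ (1 - μ) - b ^ (1 - μ)) := by
  have ha : 0 ≤ a := hb.trans hba
  have hamgm := Real.geom_mean_le_arith_mean2_weighted (w₁ := μ) (w₂ := 1 - μ)
    (p₁ := a) (p₂ := b) hμ₀ (by linarith) ha hb (by ring)
  have hsplit : a ^ μ * a ^ (1 - μ) = a := by
    rw [← Real.rpow_add' ha (by norm_num), add_sub_cancel, Real.rpow_one]
  nlinarith

section Sequences

variable {X : Type*} [PseudoMetricSpace X] {y : ℕ → X}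

theorem dist_le_sub_of_dist_succ_le_sub {e : ℕ → ℝ} {m n : ℕ} (hmn : m ≤ n)
    (h : ∀ k, m ≤ k → k < n → dist (y k) (y (k + 1)) ≤ e k - e (k + 1)) :
    dist (y m) (y n) ≤ e m - e n := by
  induction n, hmn using Nat.le_induction with
  | base => simp
  | succ n hmn ih =>
    have := ih fun k hk hkn => h k hk (hkn.trans (Nat.lt_succ_self n))
    linarith [dist_triangle (y m) (y n) (y (n + 1)), h n hmn (Nat.lt_succ_self n)]

theorem tendsto_of_dist_succ_le_sub {x : X} {e : ℕ → ℝ} {ρ : ℝ} {φ : ℕ → ℕ} (hρ : 0 < ρ)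
    (he : ∀ n, 0 ≤ e n) (he0 : Tendsto e atTop (𝓝 0)) (hφ : StrictMono φ)
    (hyφ : Tendsto (y ∘ φ) atTop (𝓝 x))
    (hstep : ∀ n, dist (y n) x < ρ → dist (y n) (y (n + 1)) ≤ e n - e (n + 1)) :
    Tendsto y atTop (𝓝 x) := by
  obtain ⟨N, hNx, hNe⟩ : ∃ N, dist (y N) x < ρ / 2 ∧ e N < ρ / 2 := by
    obtain ⟨k, hkx, hke⟩ :=
      (((tendsto_iff_dist_tendsto_zero.1 hyφ).eventually_lt_const (half_pos hρ)).and
        ((he0.comp hφ.tendsto_atTop).eventually_lt_const (half_pos hρ))).exists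
    exact ⟨φ k, hkx, hke⟩
  have hball : ∀ n, N ≤ n → dist (y n) x < ρ := by
    intro n
    induction n using Nat.strong_induction_on with
    | _ n ih =>
      intro hn
      have := dist_le_sub_of_dist_succ_le_sub hn fun k hk hkn => hstep k (ih k hkn hk)
      linarith [dist_triangle_left (y n) x (y N), he n]
  have htail : ∀ m, N ≤ m → dist (y m) x ≤ e m := by
    intro m hm
    refine le_of_tendsto (tendsto_const_nhds.dist hyφ) ?_
    filter_upwards [hφ.tendsto_atTop.eventually_ge_atTop m] with k hk
    have := dist_le_sub_of_dist_succ_le_sub hk fun j hj _ => hstep j (hball j (hm.trans hj))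
    rw [Function.comp_apply]
    linarith [he (φ k)]
  refine tendsto_iff_dist_tendsto_zero.2
    (squeeze_zero' (Eventually.of_forall fun _ => dist_nonneg) ?_ he0)
  filter_upwards [eventually_ge_atTop N] with m hm using htail m hm

theorem lt_of_dist_le_half_of_backtracking {η : ℕ → ℝ} {x : X} {r ε M q : ℝ} (hq : 1 < q)
    (hM : 0 ≤ M) (hη : ∀ n, 0 ≤ η n) (hstep : ∀ n, dist (y n) (y (n + 1)) ≤ M * η n)
    (hε : M * ε / (q - 1) ≤ r / 2) (hzero : dist (y 0) x ≤ r → ε < η 0)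
    (hsucc : ∀ n, dist (y (n + 1)) x ≤ r → η (n + 1) ≤ ε → q * η n ≤ η (n + 1))
    {n : ℕ} (hn : dist (y n) x ≤ r / 2) : ε < η n := by
  have hq₀ : 0 < q - 1 := sub_pos.2 hq
  -- Walking back from `k + 1` to `k` divides the bound `s` on `η` by `q`; the budget
  -- `M * s / (q - 1)` of the geometric series pays for the extra step `M * η k`.
  have key : ∀ k s, s ≤ ε → η k ≤ s → dist (y k) x + M * s / (q - 1) ≤ r → False := by
    intro k
    induction k with
    | zero =>
      intro s hsε hηs hd
      have : 0 ≤ M * s / (q - 1) := by have := (hη 0).trans hηs; positivity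
      exact (hzero (by linarith)).not_ge (hηs.trans hsε)
    | succ k ih =>
      intro s hsε hηs hd
      have hs : 0 ≤ s := (hη _).trans hηs
      have : 0 ≤ M * s / (q - 1) := by positivity
      have hgrow := hsucc k (by linarith) (hηs.trans hsε)
      have hηk : η k ≤ s / q := by rw [le_div_iff₀ (by linarith)]; linarith
      refine ih (s / q) ((div_le_self hs hq.le).trans hsε) hηk ?_
      calc dist (y k) x + M * (s / q) / (q - 1)
          ≤ M * η k + dist (y (k + 1)) x + M * (s / q) / (q - 1) := by
            linarith [dist_triangle (y k) (y (k + 1)) x, hstep k]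
        _ ≤ M * (s / q) + dist (y (k + 1)) x + M * (s / q) / (q - 1) := by gcongr
        _ = dist (y (k + 1)) x + M * s / (q - 1) := by field_simp; ring
        _ ≤ r := hd
  by_contra! hηn
  have : M * η n / (q - 1) ≤ M * ε / (q - 1) := by gcongr
  exact key n (η n) hηn le_rfl (by linarith)

end Sequences

section Lyapunov

variable {m : ℕ} {F : EuclideanSpace ℝ (Fin m) → EuclideanSpace ℝ (Fin m)}
  {V : EuclideanSpace ℝ (Fin m) → ℝ} {lam ηinit f1 f2 : ℝ}
  {y : ℕ → EuclideanSpace ℝ (Fin m)} {η : ℕ → ℝ}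

theorem lyapDeriv_eq_fderiv (x : EuclideanSpace ℝ (Fin m)) :
    lyapDeriv F V x = fderiv ℝ V x (F x) := by
  rw [lyapDeriv, gradient, InnerProductSpace.toDual_symm_apply]

theorem continuous_lyapDeriv (hV : ContDiff ℝ 1 V) (hF : Continuous F) :
    Continuous (lyapDeriv F V) := by
  simp only [funext lyapDeriv_eq_fderiv]
  exact (hV.continuous_fderiv one_ne_zero).clm_apply hF

theorem exists_forall_armijoGap_nonpos (hlam : lam < 1) (hV : ContDiff ℝ 1 V)
    (hF : Continuous F) {x₀ : EuclideanSpace ℝ (Fin m)} (hx₀ : lyapDeriv F V x₀ < 0) :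
    ∃ T > 0, ∀ᶠ x in 𝓝 x₀, ∀ t ∈ Set.Ioc 0 T, armijoGap F V lam x t ≤ 0 := by
  set δ := -lyapDeriv F V x₀
  have hδ : 0 < δ := neg_pos.2 hx₀
  set M := ‖F x₀‖ + 1
  have hM : 0 < M := by positivity
  -- chosen so that the first-order error `κ * ‖t • F x‖ ≤ κ * t * M` is at most the slack
  -- `(1 - λ) * t * δ / 2` that Armijo's condition leaves
  set κ := (1 - lam) * δ / (2 * M)
  obtain ⟨R, hR, htaylor⟩ :=
    exists_ball_norm_sub_sub_fderiv_le hV x₀ (κ := κ) (by have := sub_pos.2 hlam; positivity)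
  have hFM : ∀ᶠ x in 𝓝 x₀, ‖F x‖ < M :=
    (hF.norm.tendsto x₀).eventually_lt_const (lt_add_one _)
  have hdesc : ∀ᶠ x in 𝓝 x₀, lyapDeriv F V x < -δ / 2 :=
    ((continuous_lyapDeriv hV hF).tendsto x₀).eventually_lt_const (by linarith)
  refine ⟨R / (2 * M), by positivity, ?_⟩
  filter_upwards [hFM, hdesc, ball_mem_nhds x₀ (half_pos hR)] with x hxM hxd hxR t ⟨ht, htT⟩
  have hw : ‖t • F x‖ ≤ t * M := by
    rw [norm_smul, Real.norm_of_nonneg ht.le]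
    exact mul_le_mul_of_nonneg_left hxM.le ht.le
  have hxw : x + t • F x ∈ ball x₀ R := by
    have htM : t * M ≤ R / 2 := by
      rw [le_div_iff₀ (by positivity)] at htT
      linarith
    calc dist (x + t • F x) x₀ ≤ ‖t • F x‖ + dist x x₀ := by
          simpa only [dist_self_add_left] using dist_triangle (x + t • F x) x x₀
      _ < R / 2 + R / 2 := add_lt_add_of_le_of_lt (hw.trans htM) hxR
      _ = R := add_halves R
  have herr := htaylor x (ball_subset_ball (half_le_self hR.le) hxR) _ hxw
  rw [add_sub_cancel_left, map_smul, ← lyapDeriv_eq_fderiv, smul_eq_mul] at herr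
  calc armijoGap F V lam x t
      = (V (x + t • F x) - V x - t * lyapDeriv F V x) + (1 - lam) * t * lyapDeriv F V x := by
        unfold armijoGap
        ring
    _ ≤ κ * (t * M) + (1 - lam) * t * (-δ / 2) := by
        gcongr
        exact (Real.le_norm_self _).trans (herr.trans (by gcongr))
    _ = 0 := by
        simp only [κ]
        field_simp
        ring

theorem mul_norm_le_rpow_sub_rpow_of_lojasiewicz {x x' : EuclideanSpace ℝ (Fin m)}
    {v t c c₁ γ α : ℝ} (hlam : 0 < lam) (ht : 0 ≤ t) (hc : 0 < c) (hc₁ : 0 < c₁)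
    (hγ : 0 ≤ γ) (hα : α ≤ 1) (hμ : γ * (1 - α) < 1) (himp : gradient V x = 0 → F x = 0)
    (hangle : lyapDeriv F V x ≤ -c * ‖gradient V x‖ ^ γ * ‖F x‖)
    (hloj : c₁ * (V x - v) ^ (1 - α) ≤ ‖gradient V x‖)
    (hdesc : V x' ≤ V x + lam * t * lyapDeriv F V x) (hv : v ≤ V x') :
    (1 - γ * (1 - α)) * (lam * c * c₁ ^ γ) * (t * ‖F x‖) ≤
      (V x - v) ^ (1 - γ * (1 - α)) - (V x' - v) ^ (1 - γ * (1 - α)) := by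
  set a := V x - v
  set b := V x' - v
  set μ := γ * (1 - α)
  have hμ₀ : 0 ≤ μ := mul_nonneg hγ (sub_nonneg.2 hα)
  have hdrop : lam * t * (c * ‖gradient V x‖ ^ γ * ‖F x‖) ≤ a - b := by
    have := mul_le_mul_of_nonneg_left hangle (mul_nonneg hlam.le ht)
    linarith
  have hb : 0 ≤ b := sub_nonneg.2 hv
  have hba : b ≤ a := by
    have : 0 ≤ lam * t * (c * ‖gradient V x‖ ^ γ * ‖F x‖) := by positivity
    linarith
  by_cases hzero : t * ‖F x‖ = 0
  · rw [hzero, mul_zero, sub_nonneg]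
    exact Real.rpow_le_rpow hb hba (by linarith)
  have ht₀ : 0 < t := ht.lt_of_ne (by rintro rfl; simp at hzero)
  have hFx : F x ≠ 0 := by rintro hF; simp [hF] at hzero
  have hFx' := norm_pos_iff.2 hFx
  have hgrad := norm_pos_iff.2 (mt himp hFx)
  have ha : 0 < a := by
    have : 0 < lam * t * (c * ‖gradient V x‖ ^ γ * ‖F x‖) := by positivity
    linarith
  have hgrad_pow : c₁ ^ γ * a ^ μ ≤ ‖gradient V x‖ ^ γ :=
    calc c₁ ^ γ * a ^ μ = (c₁ * a ^ (1 - α)) ^ γ := by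
          rw [Real.mul_rpow hc₁.le (by positivity), ← Real.rpow_mul ha.le, mul_comm (1 - α)]
      _ ≤ ‖gradient V x‖ ^ γ := Real.rpow_le_rpow (by positivity) hloj hγ
  have hθ : 0 ≤ 1 - μ := by linarith
  refine le_of_mul_le_mul_left ?_ (Real.rpow_pos_of_pos ha μ)
  calc a ^ μ * ((1 - μ) * (lam * c * c₁ ^ γ) * (t * ‖F x‖))
      = (1 - μ) * (lam * t * c * ‖F x‖ * (c₁ ^ γ * a ^ μ)) := by ring
    _ ≤ (1 - μ) * (lam * t * c * ‖F x‖ * ‖gradient V x‖ ^ γ) := by gcongr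
    _ ≤ (1 - μ) * (a - b) := mul_le_mul_of_nonneg_left (by linarith) hθ
    _ ≤ a ^ μ * (a ^ (1 - μ) - b ^ (1 - μ)) :=
        one_sub_mul_sub_le_rpow_mul_sub_rpow hb hba hμ₀ hμ

/-- What LCR and LCM have in common: the accepted step `η n` is either the first trial step
(`ηinit`, or `f2` times the previous step) or the larger trial step `f1 * η n` was rejected. -/
structure IsArmijoStepSequence (F : EuclideanSpace ℝ (Fin m) → EuclideanSpace ℝ (Fin m))
    (V : EuclideanSpace ℝ (Fin m) → ℝ) (lam ηinit f1 f2 : ℝ)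
    (y : ℕ → EuclideanSpace ℝ (Fin m)) (η : ℕ → ℝ) : Prop where
  step : ∀ n, y (n + 1) = y n + η n • F (y n)
  pos : ∀ n, 0 < η n
  armijo : ∀ n, armijoGap F V lam (y n) (η n) ≤ 0
  first_or_rejected : ∀ n, 0 < armijoGap F V lam (y n) (f1 * η n) ∨ η n = ηinit ∨
    ∃ k, n = k + 1 ∧ η n = f2 * η k

theorem eq_or_armijoGap_mul_pos_of_forall_lt {x : EuclideanSpace ℝ (Fin m)} {b t : ℝ} {p : ℕ}
    (hf1 : f1 ≠ 0) (ht : t = b / f1 ^ p)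
    (hmin : ∀ k < p, ¬ armijoGap F V lam x (b / f1 ^ k) ≤ 0) :
    t = b ∨ 0 < armijoGap F V lam x (f1 * t) := by
  cases p with
  | zero => exact Or.inl (by simpa using ht)
  | succ k =>
    have hprev : b / f1 ^ k = f1 * t := by
      rw [ht, pow_succ]
      field_simp
    exact Or.inr (lt_of_not_ge (hprev ▸ hmin k k.lt_succ_self))

theorem IsLCR.isArmijoStepSequence (h : IsLCR F V lam ηinit f1 y η) (hηinit : 0 < ηinit)
    (hf1 : 0 < f1) (f2 : ℝ) : IsArmijoStepSequence F V lam ηinit f1 f2 y η where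
  step n := (h n).1
  pos n := by
    obtain ⟨p, hp, -⟩ := (h n).2
    rw [hp]
    positivity
  armijo n := (h n).2.choose_spec.2.1
  first_or_rejected n := by
    obtain ⟨p, hp, -, hmin⟩ := (h n).2
    exact (eq_or_armijoGap_mul_pos_of_forall_lt hf1.ne' hp hmin).elim
      (fun h => Or.inr (Or.inl h)) Or.inl

theorem IsLCM.isArmijoStepSequence (h : IsLCM F V lam ηinit f1 f2 y η) (hηinit : 0 < ηinit)
    (hf1 : 0 < f1) (hf2 : 0 < f2) : IsArmijoStepSequence F V lam ηinit f1 f2 y η where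
  step n := (h n).1
  pos n := by
    induction n with
    | zero =>
      obtain ⟨p, hp, -⟩ := (h 0).2
      rw [hp, if_pos rfl]
      positivity
    | succ n ih =>
      obtain ⟨p, hp, -⟩ := (h (n + 1)).2
      rw [hp, if_neg n.succ_ne_zero, Nat.add_sub_cancel]
      positivity
  armijo n := (h n).2.choose_spec.2.1
  first_or_rejected n := by
    obtain ⟨p, hp, -, hmin⟩ := (h n).2
    rcases eq_or_armijoGap_mul_pos_of_forall_lt hf1.ne' hp hmin with hfirst | hrej
    · cases n with
      | zero => exact Or.inr (Or.inl hfirst)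
      | succ n => exact Or.inr (Or.inr ⟨n, rfl, hfirst⟩)
    · exact Or.inl hrej

namespace IsArmijoStepSequence

theorem dist_succ (h : IsArmijoStepSequence F V lam ηinit f1 f2 y η) (n : ℕ) :
    dist (y n) (y (n + 1)) = η n * ‖F (y n)‖ := by
  rw [h.step n, dist_self_add_right, norm_smul, Real.norm_of_nonneg (h.pos n).le]

theorem V_succ_le_add (h : IsArmijoStepSequence F V lam ηinit f1 f2 y η) (n : ℕ) :
    V (y (n + 1)) ≤ V (y n) + lam * η n * lyapDeriv F V (y n) := by
  have := h.armijo n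
  rw [armijoGap, ← h.step n] at this
  linarith

theorem antitone_V (h : IsArmijoStepSequence F V lam ηinit f1 f2 y η)
    (hlam : 0 ≤ lam) (hVdot : ∀ x, lyapDeriv F V x ≤ 0) : Antitone (V ∘ y) :=
  antitone_nat_of_succ_le fun n => by
    have := mul_nonpos_of_nonneg_of_nonpos (mul_nonneg hlam (h.pos n).le) (hVdot (y n))
    simp only [Function.comp_apply]
    linarith [h.V_succ_le_add n]

theorem tendsto_V (h : IsArmijoStepSequence F V lam ηinit f1 f2 y η)
    (hlam : 0 ≤ lam) (hVdot : ∀ x, lyapDeriv F V x ≤ 0) (hV : Continuous V)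
    {φ : ℕ → ℕ} (hφ : StrictMono φ) {x₀ : EuclideanSpace ℝ (Fin m)}
    (hyφ : Tendsto (y ∘ φ) atTop (𝓝 x₀)) : Tendsto (V ∘ y) atTop (𝓝 (V x₀)) :=
  (tendsto_iff_tendsto_subseq_of_antitone (h.antitone_V hlam hVdot) hφ.tendsto_atTop).2
    ((hV.tendsto x₀).comp hyφ)

theorem tendsto_stepsize_mul_neg_lyapDeriv (h : IsArmijoStepSequence F V lam ηinit f1 f2 y η)
    (hlam : 0 < lam) (hVdot : ∀ x, lyapDeriv F V x ≤ 0) {L : ℝ} (hL : Tendsto (V ∘ y) atTop (𝓝 L)) :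
    Tendsto (fun n => η n * -lyapDeriv F V (y n)) atTop (𝓝 0) := by
  have hdrop : Tendsto (fun n => (V (y n) - V (y (n + 1))) / lam) atTop (𝓝 0) := by
    simpa using (hL.sub ((tendsto_add_atTop_iff_nat 1).2 hL)).div_const lam
  refine squeeze_zero (fun n => mul_nonneg (h.pos n).le (neg_nonneg.2 (hVdot _)))
    (fun n => ?_) hdrop
  rw [le_div_iff₀ hlam]
  linarith [h.V_succ_le_add n]

theorem exists_lt_stepsize (h : IsArmijoStepSequence F V lam ηinit f1 f2 y η)
    (hlam : lam < 1) (hηinit : 0 < ηinit) (hf1 : 0 < f1) (hf2 : 1 < f2)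
    (hV : ContDiff ℝ 1 V) (hF : Continuous F) (hbdd : Bornology.IsBounded (Set.range y))
    {x₀ : EuclideanSpace ℝ (Fin m)} (hx₀ : lyapDeriv F V x₀ < 0) :
    ∃ ε > 0, ∃ r > 0, ∀ n, dist (y n) x₀ ≤ r → ε < η n := by
  obtain ⟨T, hT, hnear⟩ := exists_forall_armijoGap_nonpos hlam hV hF hx₀
  obtain ⟨r, hr, hball⟩ := Metric.eventually_nhds_iff.1 hnear
  obtain ⟨M, hM, hFM⟩ : ∃ M > 0, ∀ n, ‖F (y n)‖ ≤ M :=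
    (hbdd.isCompact_closure.image hF).isBounded.exists_pos_norm_le.imp fun _ ⟨hM, hb⟩ =>
      ⟨hM, fun n => hb _ (Set.mem_image_of_mem F (subset_closure (Set.mem_range_self n)))⟩
  set ε := min (min (T / f1) (ηinit / 2)) (r * (f2 - 1) / (4 * M))
  have hεT : f1 * ε ≤ T := by
    have := min_le_left (min (T / f1) (ηinit / 2)) (r * (f2 - 1) / (4 * M))
    rw [← le_div_iff₀' hf1]
    exact this.trans (min_le_left _ _)
  have hεinit : ε < ηinit :=
    (min_le_left _ _).trans_lt ((min_le_right _ _).trans_lt (by linarith))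
  have hεr : M * ε / (f2 - 1) ≤ r / 2 / 2 := by
    have := min_le_right (min (T / f1) (ηinit / 2)) (r * (f2 - 1) / (4 * M))
    rw [div_le_iff₀ (by linarith)]
    rw [le_div_iff₀ (by positivity)] at this
    linarith
  have hgrown : ∀ n, dist (y n) x₀ ≤ r / 2 → η n ≤ ε → ∃ k, n = k + 1 ∧ η n = f2 * η k := by
    intro n hn hηn
    rcases h.first_or_rejected n with hrej | hinit | hgrow
    · have := hball (by linarith) (f1 * η n)
        ⟨mul_pos hf1 (h.pos n), (mul_le_mul_of_nonneg_left hηn hf1.le).trans hεT⟩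
      linarith
    · linarith
    · exact hgrow
  refine ⟨ε, by positivity, r / 4, by positivity, fun n hn => ?_⟩
  refine lt_of_dist_le_half_of_backtracking (x := x₀) (r := r / 2) hf2 hM.le
    (fun n => (h.pos n).le)
    (fun n => h.dist_succ n ▸ mul_comm M (η n) ▸ mul_le_mul_of_nonneg_left (hFM n) (h.pos n).le)
    hεr (fun hd => ?_) (fun n hd hηn => ?_) (by linarith)
  · by_contra! hη0
    obtain ⟨k, hk, -⟩ := hgrown 0 hd hη0
    exact absurd hk (Nat.zero_ne_add_one k)
  · obtain ⟨k, hk, hηk⟩ := hgrown (n + 1) hd hηn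
    obtain rfl := Nat.add_right_cancel hk
    exact hηk.ge

theorem lyapDeriv_eq_zero_of_tendsto_subseq
    (h : IsArmijoStepSequence F V lam ηinit f1 f2 y η) (hlam : lam ∈ Set.Ioo 0 1)
    (hηinit : 0 < ηinit) (hf1 : 0 < f1) (hf2 : 1 < f2) (hV : ContDiff ℝ 1 V)
    (hF : Continuous F) (hVdot : ∀ x, lyapDeriv F V x ≤ 0)
    (hbdd : Bornology.IsBounded (Set.range y)) {φ : ℕ → ℕ} (hφ : StrictMono φ)
    {x₀ : EuclideanSpace ℝ (Fin m)} (hyφ : Tendsto (y ∘ φ) atTop (𝓝 x₀)) :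
    lyapDeriv F V x₀ = 0 := by
  by_contra hne
  have hx₀ := (hVdot x₀).lt_of_ne hne
  obtain ⟨ε, hε, r, hr, hstep⟩ :=
    h.exists_lt_stepsize hlam.2 hηinit hf1 hf2 hV hF hbdd hx₀
  have hdecay := (h.tendsto_stepsize_mul_neg_lyapDeriv hlam.1 hVdot
    (h.tendsto_V hlam.1.le hVdot hV.continuous hφ hyφ)).comp hφ.tendsto_atTop
  have hbound : ∀ᶠ k in atTop,
      ε * (-lyapDeriv F V x₀ / 2) ≤ η (φ k) * -lyapDeriv F V (y (φ k)) := by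
    filter_upwards [((continuous_lyapDeriv hV hF).tendsto x₀).comp hyφ
        |>.eventually_lt_const (by linarith : lyapDeriv F V x₀ < lyapDeriv F V x₀ / 2),
      Metric.tendsto_nhds.1 hyφ r hr] with k hkd hkr
    simp only [Function.comp_apply] at hkd hkr
    exact mul_le_mul (hstep _ hkr.le).le (by linarith) (by linarith) (h.pos _).le
  have := ge_of_tendsto hdecay hbound
  linarith [mul_pos hε (by linarith : 0 < -lyapDeriv F V x₀ / 2)]

theorem tendsto_of_lojasiewicz
    (h : IsArmijoStepSequence F V lam ηinit f1 f2 y η) (hlam : 0 < lam) (hV : Continuous V)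
    (hVdot : ∀ x, lyapDeriv F V x ≤ 0) (himp : ∀ x, gradient V x = 0 → F x = 0)
    {φ : ℕ → ℕ} (hφ : StrictMono φ) {x₀ : EuclideanSpace ℝ (Fin m)}
    (hyφ : Tendsto (y ∘ φ) atTop (𝓝 x₀)) {U : Set (EuclideanSpace ℝ (Fin m))}
    (hU : U ∈ 𝓝 x₀)
    {γ α c c₁ : ℝ} (hγ : 0 ≤ γ) (hα : α ≤ 1) (hc : 0 < c) (hc₁ : 0 < c₁)
    (hangle : ∀ x ∈ U, lyapDeriv F V x ≤ -c * ‖gradient V x‖ ^ γ * ‖F x‖)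
    (hloj : ∀ x ∈ U, c₁ * (V x - V x₀) ^ (1 - α) ≤ ‖gradient V x‖)
    (hμ : γ * (1 - α) < 1) :
    Tendsto y atTop (𝓝 x₀) := by
  set μ := γ * (1 - α)
  have hθ : 0 < 1 - μ := sub_pos.2 hμ
  have hVy := h.tendsto_V hlam.le hVdot hV hφ hyφ
  have hge : ∀ n, V x₀ ≤ V (y n) := (h.antitone_V hlam.le hVdot).le_of_tendsto hVy
  obtain ⟨ρ, hρ, hρU⟩ := Metric.mem_nhds_iff.1 hU
  have hA : 0 < (1 - μ) * (lam * c * c₁ ^ γ) := mul_pos hθ (by positivity)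
  refine tendsto_of_dist_succ_le_sub hρ
    (e := fun n => ((1 - μ) * (lam * c * c₁ ^ γ))⁻¹ * (V (y n) - V x₀) ^ (1 - μ))
    (fun n => mul_nonneg (inv_pos.2 hA).le (Real.rpow_nonneg (sub_nonneg.2 (hge n)) _))
    ?_ hφ hyφ fun n hn => ?_
  · have := ((hVy.sub_const (V x₀)).rpow_const (Or.inr hθ.le)).const_mul
      ((1 - μ) * (lam * c * c₁ ^ γ))⁻¹
    rwa [sub_self, Real.zero_rpow hθ.ne', mul_zero] at this
  · rw [h.dist_succ, ← mul_sub, le_inv_mul_iff₀ hA]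
    exact mul_norm_le_rpow_sub_rpow_of_lojasiewicz hlam (h.pos n).le hc hc₁ hγ hα hμ (himp _)
      (hangle _ (hρU hn)) (hloj _ (hρU hn)) (h.V_succ_le_add n) (hge (n + 1))

end IsArmijoStepSequence

end Lyapunov

theorem abstract_convergence_general
    {m : ℕ} (lam ηinit f1 f2 : ℝ)
    (hlam : lam ∈ Set.Ioo (0 : ℝ) 1) (hηinit : 0 < ηinit) (hf1 : 1 < f1) (hf2 : 1 < f2)
    (F : EuclideanSpace ℝ (Fin m) → EuclideanSpace ℝ (Fin m))
    (V : EuclideanSpace ℝ (Fin m) → ℝ)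
    (hF : Continuous F) (hV : ContDiff ℝ 2 V)
    (hVdot : ∀ y, lyapDeriv F V y ≤ 0)
    (himp : ∀ y, gradient V y = 0 → F y = 0)
    (hframe : ∀ ystar, lyapDeriv F V ystar = 0 →
      ∃ U ∈ nhds ystar, ∃ γ α₁ c c₁ : ℝ,
        0 ≤ γ ∧ α₁ ∈ Set.Ioo (0 : ℝ) 1 ∧ 0 < c ∧ 0 < c₁ ∧
        (∀ y ∈ U, lyapDeriv F V y ≤ -c * ‖gradient V y‖ ^ γ * ‖F y‖) ∧
        (∀ y ∈ U, c₁ * (V y - V ystar) ^ (1 - α₁) ≤ ‖gradient V y‖) ∧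
        γ * (1 - α₁) < 1)
    (y : ℕ → EuclideanSpace ℝ (Fin m)) (η : ℕ → ℝ)
    (halg : IsLCR F V lam ηinit f1 y η ∨ IsLCM F V lam ηinit f1 f2 y η)
    (hbdd : Bornology.IsBounded (Set.range y)) :
    ∃ ystar, lyapDeriv F V ystar = 0 ∧ Tendsto y atTop (nhds ystar) := by
  have hV₁ : ContDiff ℝ 1 V := hV.of_le (by norm_num)
  have h : IsArmijoStepSequence F V lam ηinit f1 f2 y η :=
    halg.elim (·.isArmijoStepSequence hηinit (by linarith) f2)
      (·.isArmijoStepSequence hηinit (by linarith) (by linarith))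
  obtain ⟨x₀, -, φ, hφ, hyφ⟩ := tendsto_subseq_of_bounded hbdd (Set.mem_range_self ·)
  have hx₀ : lyapDeriv F V x₀ = 0 :=
    h.lyapDeriv_eq_zero_of_tendsto_subseq hlam hηinit (by linarith) hf2 hV₁ hF hVdot hbdd
      hφ hyφ
  obtain ⟨U, hU, γ, α₁, c, c₁, hγ, hα₁, hc, hc₁, hangle, hloj, hμ⟩ := hframe x₀ hx₀
  exact ⟨x₀, hx₀, h.tendsto_of_lojasiewicz hlam.1 hV.continuous hVdot himp hφ hyφ hU hγ
    hα₁.2.le hc hc₁ hangle hloj hμ⟩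

/-- **Abstract convergence framework.** Under the local angle/Łojasiewicz-type conditions
(i)–(iii) at every point of `Z = {y | V̇(y) = 0}`, every bounded sequence generated by LCR or
LCM converges to some point of `Z`. -/
theorem abstract_convergence
    {m : ℕ} (lam ηinit f1 f2 : ℝ)
    (hlam : lam ∈ Set.Ioo (0 : ℝ) 1) (hηinit : 0 < ηinit) (hf1 : 1 < f1) (hf2 : 1 < f2)
    (F : EuclideanSpace ℝ (Fin m) → EuclideanSpace ℝ (Fin m))
    (V : EuclideanSpace ℝ (Fin m) → ℝ)
    (hF : Continuous F) (hV : ContDiff ℝ 2 V) (hV0 : ∀ y, 0 ≤ V y)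
    (hVdot : ∀ y, lyapDeriv F V y ≤ 0)
    (himp : ∀ y, gradient V y = 0 → F y = 0)
    (hframe : ∀ ystar, lyapDeriv F V ystar = 0 →
      ∃ U ∈ nhds ystar, ∃ γ α₁ c c₁ : ℝ,
        0 ≤ γ ∧ α₁ ∈ Set.Ioo (0 : ℝ) 1 ∧ 0 < c ∧ 0 < c₁ ∧
        (∀ y ∈ U, lyapDeriv F V y ≤ -c * ‖gradient V y‖ ^ γ * ‖F y‖) ∧
        (∀ y ∈ U, c₁ * (V y - V ystar) ^ (1 - α₁) ≤ ‖gradient V y‖) ∧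
        γ * (1 - α₁) < 1)
    (y : ℕ → EuclideanSpace ℝ (Fin m)) (η : ℕ → ℝ)
    (halg : IsLCR F V lam ηinit f1 y η ∨ IsLCM F V lam ηinit f1 f2 y η)
    (hbdd : Bornology.IsBounded (Set.range y)) :
    ∃ ystar, lyapDeriv F V ystar = 0 ∧ Tendsto y atTop (nhds ystar) :=
  abstract_convergence_general lam ηinit f1 f2 hlam hηinit hf1 hf2 F V hF hV hVdot himp hframe y η
    halg hbdd
end

section
/- Under the hypotheses of the abstract convergence framework, let (y_n) be a bounded sequence generated by LCR or LCM converging to y* ∈ Z, and assume additionally that there exist c₂ > 0 and α₂ ≤ 1 with ‖F(y)‖ ≥ c₂·(V(y) − V(y*))^{1−α₂} for all y ∈ U. If α₂/(1−α₁) < γ, then there exists n₀ ∈ ℕ such that for all n ≥ n₀: ‖y_n − y*‖ ≤ C₁ / [ (V(y_{n₀}) − V(y*))^{α₂−γ(1−α₁)} + C₂·Σ_{k=n₀}^{n−1} η_k ]^{(1−γ(1−α₁))/(γ(1−α₁)−α₂)}, where C₁ = 1/(λ·c·c₁^γ·(1−γ(1−α₁))) and C₂ = λ·c·c₁^γ·c₂·(γ(1−α₁)−α₂).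 -/
open Filter

/-!
Write `e k = V (y k) - V y*` and `σ = γ (1 - α₁)`. Once the iterates stay in `U`, the Armijo
condition with (i) and (ii) gives the descent inequality
`λ c c₁^γ e_k^σ ‖y_{k+1} - y_k‖ ≤ e_k - e_{k+1}`. Concavity of `t ↦ t^(1-σ)` makes the step lengths
telescope, so `‖y_n - y*‖ ≤ e_n^(1-σ) / (λ c c₁^γ (1 - σ))`. Bounding the step length
`η_k ‖F (y_k)‖` from below by (iv) turns the descent inequality into
`K η_k e_k^(1+θ) ≤ e_k - e_{k+1}` with `θ = σ - α₂ > 0`, and convexity of `t ↦ t^(-θ)` telescopes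
this into `e_{n₀}^(-θ) + θ K ∑ η_k ≤ e_n^(-θ)`. Eliminating `e_n` gives the rate.
-/

open Topology

namespace Real

lemma mul_le_rpow_sub_rpow_of_le_sub {a b d L σ : ℝ} (ha : 0 < a) (hb : 0 ≤ b)
    (hσ₀ : 0 ≤ σ) (hσ₁ : σ ≤ 1) (h : L * a ^ σ * d ≤ a - b) :
    L * (1 - σ) * d ≤ a ^ (1 - σ) - b ^ (1 - σ) := by
  have hbern : (b / a) ^ (1 - σ) ≤ 1 + (1 - σ) * (b / a - 1) := by
    simpa using rpow_one_add_le_one_add_mul_self (s := b / a - 1)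
      (by linarith [div_nonneg hb ha.le]) (by linarith) (by linarith)
  have hb_eq : b ^ (1 - σ) = a ^ (1 - σ) * (b / a) ^ (1 - σ) := by
    rw [← mul_rpow ha.le (div_nonneg hb ha.le), mul_div_cancel₀ _ ha.ne']
  have ha_eq : a ^ (1 - σ) = a * a ^ (-σ) := by
    rw [sub_eq_add_neg, rpow_add ha, rpow_one]
  have hinv : a ^ (-σ) * a ^ σ = 1 := by
    rw [← rpow_add ha, neg_add_cancel, rpow_zero]
  have hw : 0 ≤ (1 - σ) * a ^ (-σ) := mul_nonneg (by linarith) (rpow_nonneg ha.le _)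
  calc L * (1 - σ) * d = (1 - σ) * a ^ (-σ) * (L * a ^ σ * d) := by
        linear_combination (-(L * (1 - σ) * d)) * hinv
    _ ≤ (1 - σ) * a ^ (-σ) * (a - b) := mul_le_mul_of_nonneg_left h hw
    _ = a ^ (1 - σ) - a ^ (1 - σ) * (1 + (1 - σ) * (b / a - 1)) := by
        rw [ha_eq]; field_simp; ring
    _ ≤ a ^ (1 - σ) - b ^ (1 - σ) := by
        rw [hb_eq]; gcongr

lemma rpow_neg_add_mul_le_of_mul_rpow_le {a b M θ : ℝ} (ha : 0 < a) (hb : 0 < b) (hθ : 0 ≤ θ)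
    (h : M * a ^ (1 + θ) ≤ a - b) :
    a ^ (-θ) + θ * M ≤ b ^ (-θ) := by
  have hbern : 1 + (1 + θ) * (a / b - 1) ≤ (a / b) ^ (1 + θ) := by
    simpa using one_add_mul_self_le_rpow_one_add (s := a / b - 1)
      (by linarith [div_pos ha hb]) (by linarith)
  have hinv : a ^ (-θ) * a ^ θ = 1 := by
    rw [← rpow_add ha, neg_add_cancel, rpow_zero]
  have ha_eq : a ^ (1 + θ) = a * a ^ θ := by rw [rpow_add ha, rpow_one]
  have hb_eq : b ^ (-θ) = a ^ (-θ) * (b / a) * (a / b) ^ (1 + θ) := by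
    rw [div_rpow ha.le hb.le, rpow_add ha, rpow_add hb, rpow_neg hb.le, rpow_one, rpow_one]
    field_simp
    linear_combination -hinv
  have hw : 0 ≤ θ * (a ^ (-θ) / a) := mul_nonneg hθ (div_nonneg (rpow_nonneg ha.le _) ha.le)
  calc a ^ (-θ) + θ * M = a ^ (-θ) + θ * (a ^ (-θ) / a) * (M * a ^ (1 + θ)) := by
        rw [ha_eq]; field_simp; linear_combination (-(θ * M)) * hinv
    _ ≤ a ^ (-θ) + θ * (a ^ (-θ) / a) * (a - b) := by gcongr
    _ = a ^ (-θ) * (b / a) * (1 + (1 + θ) * (a / b - 1)) := by field_simp; ring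
    _ ≤ b ^ (-θ) := by rw [hb_eq]; gcongr

lemma rpow_le_one_div_rpow_div_of_le_rpow_neg {e D θ r : ℝ} (he : 0 < e) (hD : 0 < D)
    (hθ : 0 < θ) (hr : 0 ≤ r) (h : D ≤ e ^ (-θ)) :
    e ^ r ≤ 1 / D ^ (r / θ) := by
  have hDe : D ^ (r / θ) ≤ e ^ (-r) := by
    calc D ^ (r / θ) ≤ (e ^ (-θ)) ^ (r / θ) := by gcongr
      _ = e ^ (-r) := by rw [← rpow_mul he.le]; congr 1; field_simp
  rw [le_div_iff₀ (by positivity), ← le_div_iff₀' (by positivity), one_div, ← rpow_neg he.le]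
  exact hDe

lemma rpow_mul_rpow_mul_le_rpow_of_mul_rpow_le {c e g β γ : ℝ} (hc : 0 ≤ c) (he : 0 ≤ e)
    (hγ : 0 ≤ γ) (h : c * e ^ β ≤ g) : c ^ γ * e ^ (γ * β) ≤ g ^ γ := by
  rw [mul_comm γ, rpow_mul he, ← mul_rpow hc (rpow_nonneg he _)]
  exact rpow_le_rpow (by positivity) h hγ

end Real

lemma add_sum_Ico_le_of_add_le {u w : ℕ → ℝ} {m n : ℕ} (hmn : m ≤ n)
    (h : ∀ k ∈ Finset.Ico m n, u k + w k ≤ u (k + 1)) :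
    u m + ∑ k ∈ Finset.Ico m n, w k ≤ u n := by
  have := Finset.sum_le_sum fun k hk => le_sub_iff_add_le'.2 (h k hk)
  rw [Finset.sum_Ico_sub u hmn] at this
  linarith

lemma dist_le_of_tendsto_of_dist_succ_le {X : Type*} [PseudoMetricSpace X] {x : ℕ → X} {a : X}
    {u : ℕ → ℝ} {n : ℕ} (hx : Tendsto x atTop (𝓝 a)) (hu : ∀ k ≥ n, 0 ≤ u k)
    (h : ∀ k ≥ n, dist (x k) (x (k + 1)) ≤ u k - u (k + 1)) :
    dist (x n) a ≤ u n := by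
  have hN : ∀ N ≥ n, dist (x n) (x N) ≤ u n - u N := fun N hN =>
    calc dist (x n) (x N) ≤ ∑ k ∈ Finset.Ico n N, dist (x k) (x (k + 1)) :=
          dist_le_Ico_sum_dist x hN
      _ ≤ ∑ k ∈ Finset.Ico n N, (u k - u (k + 1)) :=
          Finset.sum_le_sum fun k hk => h k (Finset.mem_Ico.1 hk).1
      _ = u n - u N := by
          rw [← neg_sub, ← Finset.sum_Ico_sub u hN, ← Finset.sum_neg_distrib]
          simp only [neg_sub]
  refine le_of_tendsto (tendsto_const_nhds.dist hx) (eventually_atTop.2 ⟨n, fun N hNn => ?_⟩)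
  linarith [hN N hNn, hu N hNn]

section Lojasiewicz

variable {X : Type*} [PseudoMetricSpace X] {x : ℕ → X} {e w : ℕ → ℝ} {L σ : ℝ} {n₀ : ℕ}

lemma succ_le_of_descent (he : ∀ k ≥ n₀, 0 ≤ e k) (hL : 0 < L)
    (hlen : ∀ k ≥ n₀, L * e k ^ σ * dist (x k) (x (k + 1)) ≤ e k - e (k + 1)) :
    ∀ k ≥ n₀, e (k + 1) ≤ e k := fun k hk => by
  have : 0 ≤ L * e k ^ σ * dist (x k) (x (k + 1)) := by
    have := Real.rpow_nonneg (he k hk) σ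
    positivity
  linarith [hlen k hk]

lemma mul_dist_succ_le_of_descent (he : ∀ k ≥ n₀, 0 ≤ e k) (hL : 0 < L) (hσ₀ : 0 ≤ σ)
    (hσ₁ : σ ≤ 1) (hnull : ∀ k ≥ n₀, e k = 0 → x (k + 1) = x k)
    (hlen : ∀ k ≥ n₀, L * e k ^ σ * dist (x k) (x (k + 1)) ≤ e k - e (k + 1)) (k : ℕ)
    (hk : k ≥ n₀) :
    L * (1 - σ) * dist (x k) (x (k + 1)) ≤ e k ^ (1 - σ) - e (k + 1) ^ (1 - σ) := by
  rcases (he k hk).eq_or_lt with hek | hek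
  -- for `σ > 0`, `hlen` says nothing about the step once `e k = 0`: `hnull` covers that case
  · have hek' : e (k + 1) = 0 :=
      le_antisymm (hek ▸ succ_le_of_descent he hL hlen k hk) (he (k + 1) (by omega))
    rw [hnull k hk hek.symm, ← hek, hek', dist_self, mul_zero, sub_self]
  · exact Real.mul_le_rpow_sub_rpow_of_le_sub hek (he (k + 1) (by omega)) hσ₀ hσ₁ (hlen k hk)

lemma dist_le_rpow_of_descent {a : X} (hx : Tendsto x atTop (𝓝 a)) (he : ∀ k ≥ n₀, 0 ≤ e k)
    (hL : 0 < L) (hσ₀ : 0 ≤ σ) (hσ₁ : σ < 1) (hnull : ∀ k ≥ n₀, e k = 0 → x (k + 1) = x k)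
    (hlen : ∀ k ≥ n₀, L * e k ^ σ * dist (x k) (x (k + 1)) ≤ e k - e (k + 1)) {n : ℕ}
    (hn : n₀ ≤ n) :
    dist (x n) a ≤ e n ^ (1 - σ) / (L * (1 - σ)) := by
  have hL' : 0 < L * (1 - σ) := mul_pos hL (by linarith)
  refine dist_le_of_tendsto_of_dist_succ_le hx
    (fun k hk => div_nonneg (Real.rpow_nonneg (he k (hn.trans hk)) _) hL'.le) fun k hk => ?_
  rw [← sub_div, le_div_iff₀' hL']
  exact mul_dist_succ_le_of_descent he hL hσ₀ hσ₁.le hnull hlen k (hn.trans hk)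

lemma rpow_neg_add_mul_sum_le_of_descent {M θ : ℝ} {n : ℕ} (hθ : 0 ≤ θ) (hn : n₀ ≤ n)
    (hpos : ∀ k, n₀ ≤ k → k ≤ n → 0 < e k)
    (hrate : ∀ k ≥ n₀, M * w k * e k ^ (1 + θ) ≤ e k - e (k + 1)) :
    e n₀ ^ (-θ) + M * θ * ∑ k ∈ Finset.Ico n₀ n, w k ≤ e n ^ (-θ) := by
  rw [Finset.mul_sum]
  refine add_sum_Ico_le_of_add_le (u := fun k => e k ^ (-θ)) hn fun k hk => ?_
  obtain ⟨hk₀, hkn⟩ := Finset.mem_Ico.1 hk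
  have := Real.rpow_neg_add_mul_le_of_mul_rpow_le (hpos k hk₀ hkn.le)
    (hpos (k + 1) (by omega) hkn) hθ (hrate k hk₀)
  linarith

theorem dist_le_div_rpow_of_lojasiewicz {a : X} {c α : ℝ} {n : ℕ} (hx : Tendsto x atTop (𝓝 a))
    (he : ∀ k ≥ n₀, 0 ≤ e k) (hw : ∀ k ≥ n₀, 0 ≤ w k) (hL : 0 < L) (hc : 0 ≤ c)
    (hσ₀ : 0 ≤ σ) (hσ₁ : σ < 1) (hα : α < σ) (hnull : ∀ k ≥ n₀, e k = 0 → x (k + 1) = x k)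
    (hlen : ∀ k ≥ n₀, L * e k ^ σ * dist (x k) (x (k + 1)) ≤ e k - e (k + 1))
    (hstep : ∀ k ≥ n₀, c * w k * e k ^ (1 - α) ≤ dist (x k) (x (k + 1))) (hn : n₀ ≤ n) :
    dist (x n) a ≤ 1 / (L * (1 - σ)) /
      (e n₀ ^ (α - σ) + L * c * (σ - α) * ∑ k ∈ Finset.Ico n₀ n, w k) ^ ((1 - σ) / (σ - α)) := by
  have hdist := dist_le_rpow_of_descent hx he hL hσ₀ hσ₁ hnull hlen hn
  have hS : 0 ≤ L * c * (σ - α) * ∑ k ∈ Finset.Ico n₀ n, w k :=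
    mul_nonneg (mul_nonneg (mul_nonneg hL.le hc) (sub_nonneg.2 hα.le))
      (Finset.sum_nonneg fun k hk => hw k (Finset.mem_Ico.1 hk).1)
  set D := e n₀ ^ (α - σ) + L * c * (σ - α) * ∑ k ∈ Finset.Ico n₀ n, w k
  rcases (he n hn).eq_or_lt with hen | hen
  · rw [← hen, Real.zero_rpow (by linarith), zero_div] at hdist
    refine hdist.trans (div_nonneg (div_nonneg zero_le_one ?_) (Real.rpow_nonneg ?_ _))
    · exact mul_nonneg hL.le (by linarith)
    · exact add_nonneg (Real.rpow_nonneg (he n₀ le_rfl) _) hS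
  have hpos : ∀ k, n₀ ≤ k → k ≤ n → 0 < e k := fun k hk hkn =>
    hen.trans_le (antitoneOn_nat_Ici_of_succ_le (succ_le_of_descent he hL hlen) hk hn hkn)
  have hrate : ∀ k ≥ n₀, L * c * w k * e k ^ (1 + (σ - α)) ≤ e k - e (k + 1) := fun k hk =>
    calc L * c * w k * e k ^ (1 + (σ - α)) = L * e k ^ σ * (c * w k * e k ^ (1 - α)) := by
          rw [show 1 + (σ - α) = σ + (1 - α) by ring, Real.rpow_add' (he k hk) (by linarith)]
          ring
      _ ≤ L * e k ^ σ * dist (x k) (x (k + 1)) :=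
          mul_le_mul_of_nonneg_left (hstep k hk) (mul_nonneg hL.le (Real.rpow_nonneg (he k hk) _))
      _ ≤ e k - e (k + 1) := hlen k hk
  have hD : D ≤ e n ^ (-(σ - α)) := by
    simpa only [neg_sub] using
      rpow_neg_add_mul_sum_le_of_descent (sub_nonneg.2 hα.le) hn hpos hrate
  have hD₀ : 0 < D := add_pos_of_pos_of_nonneg (Real.rpow_pos_of_pos (hpos n₀ le_rfl hn) _) hS
  calc dist (x n) a ≤ e n ^ (1 - σ) / (L * (1 - σ)) := hdist
    _ ≤ 1 / D ^ ((1 - σ) / (σ - α)) / (L * (1 - σ)) := by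
        gcongr
        exact Real.rpow_le_one_div_rpow_div_of_le_rpow_neg hen hD₀ (sub_pos.2 hα) (by linarith) hD
    _ = 1 / (L * (1 - σ)) / D ^ ((1 - σ) / (σ - α)) := by ring

end Lojasiewicz

structure IsArmijoSequence {m : ℕ}
    (F : EuclideanSpace ℝ (Fin m) → EuclideanSpace ℝ (Fin m))
    (V : EuclideanSpace ℝ (Fin m) → ℝ) (lam : ℝ)
    (y : ℕ → EuclideanSpace ℝ (Fin m)) (η : ℕ → ℝ) : Prop where
  step : ∀ n, y (n + 1) = y n + η n • F (y n)
  nonneg : ∀ n, 0 ≤ η n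
  armijo : ∀ n, armijoGap F V lam (y n) (η n) ≤ 0

section Armijo

variable {m : ℕ} {F : EuclideanSpace ℝ (Fin m) → EuclideanSpace ℝ (Fin m)}
  {V : EuclideanSpace ℝ (Fin m) → ℝ} {lam ηinit f1 f2 : ℝ}
  {y : ℕ → EuclideanSpace ℝ (Fin m)} {η : ℕ → ℝ}

lemma IsLCR.isArmijoSequence (h : IsLCR F V lam ηinit f1 y η) (hηinit : 0 ≤ ηinit)
    (hf1 : 0 ≤ f1) : IsArmijoSequence F V lam y η where
  step n := (h n).1
  nonneg n := by
    obtain ⟨p, hp, -⟩ := (h n).2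
    rw [hp]
    positivity
  armijo n := (h n).2.choose_spec.2.1

lemma IsLCM.isArmijoSequence (h : IsLCM F V lam ηinit f1 f2 y η) (hηinit : 0 ≤ ηinit)
    (hf1 : 0 ≤ f1) (hf2 : 0 ≤ f2) : IsArmijoSequence F V lam y η where
  step n := (h n).1
  nonneg n := by
    induction n with
    | zero =>
      obtain ⟨p, hp, -⟩ := (h 0).2
      rw [hp, if_pos rfl]
      positivity
    | succ n ih =>
      obtain ⟨p, hp, -⟩ := (h (n + 1)).2
      rw [hp, if_neg n.succ_ne_zero, Nat.add_sub_cancel]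
      positivity
  armijo n := (h n).2.choose_spec.2.1

namespace IsArmijoSequence

variable (h : IsArmijoSequence F V lam y η)
include h

lemma dist_succ (n : ℕ) : dist (y n) (y (n + 1)) = η n * ‖F (y n)‖ := by
  rw [h.step n, dist_self_add_right, norm_smul, Real.norm_of_nonneg (h.nonneg n)]

lemma sufficient_decrease (n : ℕ) :
    lam * η n * -lyapDeriv F V (y n) ≤ V (y n) - V (y (n + 1)) := by
  have := h.armijo n
  rw [armijoGap, ← h.step n] at this
  linarith

lemma antitone (hlam : 0 ≤ lam) (hVdot : ∀ z, lyapDeriv F V z ≤ 0) :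
    Antitone fun n => V (y n) :=
  antitone_nat_of_succ_le fun n => by
    have := mul_nonneg (mul_nonneg hlam (h.nonneg n)) (neg_nonneg.2 (hVdot (y n)))
    linarith [h.sufficient_decrease n]

lemma mul_dist_succ_le (hlam : 0 ≤ lam) {c γ : ℝ} {n : ℕ}
    (hdesc : lyapDeriv F V (y n) ≤ -c * ‖gradient V (y n)‖ ^ γ * ‖F (y n)‖) :
    lam * c * ‖gradient V (y n)‖ ^ γ * dist (y n) (y (n + 1)) ≤ V (y n) - V (y (n + 1)) :=
  calc lam * c * ‖gradient V (y n)‖ ^ γ * dist (y n) (y (n + 1))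
      = lam * η n * (c * ‖gradient V (y n)‖ ^ γ * ‖F (y n)‖) := by rw [h.dist_succ]; ring
    _ ≤ lam * η n * -lyapDeriv F V (y n) :=
        mul_le_mul_of_nonneg_left (by linarith) (mul_nonneg hlam (h.nonneg n))
    _ ≤ V (y n) - V (y (n + 1)) := h.sufficient_decrease n

lemma succ_eq_of_le (hlam : 0 < lam) {c γ : ℝ} (hc : 0 < c) {n : ℕ}
    (hdesc : lyapDeriv F V (y n) ≤ -c * ‖gradient V (y n)‖ ^ γ * ‖F (y n)‖)
    (himp : gradient V (y n) = 0 → F (y n) = 0) (hle : V (y n) ≤ V (y (n + 1))) :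
    y (n + 1) = y n := by
  rcases eq_or_ne (gradient V (y n)) 0 with hg | hg
  · rw [h.step n, himp hg, smul_zero, add_zero]
  · have hpos : 0 < lam * c * ‖gradient V (y n)‖ ^ γ := by
      have := norm_pos_iff.2 hg
      positivity
    have hd := h.mul_dist_succ_le hlam.le hdesc
    exact (dist_le_zero.1 (nonpos_of_mul_nonpos_right (by linarith) hpos)).symm

end IsArmijoSequence

end Armijo

theorem abstract_convergence_rate_subexponential_general
    {m : ℕ} (lam ηinit f1 f2 : ℝ)
    (hlam : lam ∈ Set.Ioo (0 : ℝ) 1) (hηinit : 0 < ηinit) (hf1 : 1 < f1) (hf2 : 1 < f2)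
    (F : EuclideanSpace ℝ (Fin m) → EuclideanSpace ℝ (Fin m))
    (V : EuclideanSpace ℝ (Fin m) → ℝ)
    (hV : ContDiff ℝ 2 V)
    (hVdot : ∀ y, lyapDeriv F V y ≤ 0)
    (himp : ∀ y, gradient V y = 0 → F y = 0)
    (y : ℕ → EuclideanSpace ℝ (Fin m)) (η : ℕ → ℝ)
    (halg : IsLCR F V lam ηinit f1 y η ∨ IsLCM F V lam ηinit f1 f2 y η)
    (ystar : EuclideanSpace ℝ (Fin m))
    (hconv : Tendsto y atTop (nhds ystar))
    (U : Set (EuclideanSpace ℝ (Fin m))) (hU : U ∈ nhds ystar)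
    (γ α₁ c c₁ c₂ α₂ : ℝ)
    (hγ : 0 ≤ γ) (hα₁ : α₁ ∈ Set.Ioo (0 : ℝ) 1) (hc : 0 < c) (hc₁ : 0 < c₁)
    (hi : ∀ z ∈ U, lyapDeriv F V z ≤ -c * ‖gradient V z‖ ^ γ * ‖F z‖)
    (hii : ∀ z ∈ U, c₁ * (V z - V ystar) ^ (1 - α₁) ≤ ‖gradient V z‖)
    (hiii : γ * (1 - α₁) < 1)
    (hc₂ : 0 < c₂)
    (hiv : ∀ z ∈ U, c₂ * (V z - V ystar) ^ (1 - α₂) ≤ ‖F z‖)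
    (hcase : α₂ / (1 - α₁) < γ) :
    ∃ n₀ : ℕ, ∀ n ≥ n₀,
      ‖y n - ystar‖ ≤
        (1 / (lam * c * c₁ ^ γ * (1 - γ * (1 - α₁)))) /
          ((V (y n₀) - V ystar) ^ (α₂ - γ * (1 - α₁)) +
              lam * c * c₁ ^ γ * c₂ * (γ * (1 - α₁) - α₂) * ∑ k ∈ Finset.Ico n₀ n, η k) ^
            ((1 - γ * (1 - α₁)) / (γ * (1 - α₁) - α₂)) := by
  obtain ⟨hlam₀, -⟩ := hlam
  have hα₁' : 0 < 1 - α₁ := sub_pos.2 hα₁.2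
  have hseq : IsArmijoSequence F V lam y η := halg.elim
    (·.isArmijoSequence hηinit.le (by linarith))
    (·.isArmijoSequence hηinit.le (by linarith) (by linarith))
  have hVy : ∀ n, V ystar ≤ V (y n) :=
    (hseq.antitone hlam₀.le hVdot).le_of_tendsto ((hV.continuous.tendsto ystar).comp hconv)
  obtain ⟨n₀, hn₀⟩ := eventually_atTop.1 (hconv.eventually_mem hU)
  refine ⟨n₀, fun n hn => ?_⟩
  rw [← dist_eq_norm]
  refine dist_le_div_rpow_of_lojasiewicz hconv (fun k _ => sub_nonneg.2 (hVy k))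
    (fun k _ => hseq.nonneg k) (by positivity) hc₂.le (mul_nonneg hγ hα₁'.le) hiii
    ((div_lt_iff₀ hα₁').1 hcase) (fun k hk hk0 => ?_) (fun k hk => ?_) (fun k hk => ?_) hn
  · exact hseq.succ_eq_of_le hlam₀ hc (hi _ (hn₀ k hk)) (himp _) (by linarith [hVy (k + 1)])
  · have hgrad := Real.rpow_mul_rpow_mul_le_rpow_of_mul_rpow_le hc₁.le (sub_nonneg.2 (hVy k)) hγ
      (hii _ (hn₀ k hk))
    calc lam * c * c₁ ^ γ * (V (y k) - V ystar) ^ (γ * (1 - α₁)) * dist (y k) (y (k + 1))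
        = lam * c * (c₁ ^ γ * (V (y k) - V ystar) ^ (γ * (1 - α₁))) * dist (y k) (y (k + 1)) := by
          ring
      _ ≤ lam * c * ‖gradient V (y k)‖ ^ γ * dist (y k) (y (k + 1)) := by gcongr
      _ ≤ V (y k) - V (y (k + 1)) := hseq.mul_dist_succ_le hlam₀.le (hi _ (hn₀ k hk))
      _ = _ := by ring
  · rw [hseq.dist_succ, mul_comm c₂, mul_assoc]
    exact mul_le_mul_of_nonneg_left (hiv _ (hn₀ k hk)) (hseq.nonneg k)

/-- **Subexponential convergence rate** in the abstract convergence framework, in the case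
`α₂/(1−α₁) < γ`, with `C₁ = 1/(λ c c₁^γ (1−γ(1−α₁)))` and
`C₂ = λ c c₁^γ c₂ (γ(1−α₁) − α₂)`. -/
theorem abstract_convergence_rate_subexponential
    {m : ℕ} (lam ηinit f1 f2 : ℝ)
    (hlam : lam ∈ Set.Ioo (0 : ℝ) 1) (hηinit : 0 < ηinit) (hf1 : 1 < f1) (hf2 : 1 < f2)
    (F : EuclideanSpace ℝ (Fin m) → EuclideanSpace ℝ (Fin m))
    (V : EuclideanSpace ℝ (Fin m) → ℝ)
    (hF : Continuous F) (hV : ContDiff ℝ 2 V) (hV0 : ∀ y, 0 ≤ V y)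
    (hVdot : ∀ y, lyapDeriv F V y ≤ 0)
    (himp : ∀ y, gradient V y = 0 → F y = 0)
    (y : ℕ → EuclideanSpace ℝ (Fin m)) (η : ℕ → ℝ)
    (halg : IsLCR F V lam ηinit f1 y η ∨ IsLCM F V lam ηinit f1 f2 y η)
    (hbdd : Bornology.IsBounded (Set.range y))
    (ystar : EuclideanSpace ℝ (Fin m)) (hZ : lyapDeriv F V ystar = 0)
    (hconv : Tendsto y atTop (nhds ystar))
    (U : Set (EuclideanSpace ℝ (Fin m))) (hU : U ∈ nhds ystar)
    (γ α₁ c c₁ c₂ α₂ : ℝ)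
    (hγ : 0 ≤ γ) (hα₁ : α₁ ∈ Set.Ioo (0 : ℝ) 1) (hc : 0 < c) (hc₁ : 0 < c₁)
    (hi : ∀ z ∈ U, lyapDeriv F V z ≤ -c * ‖gradient V z‖ ^ γ * ‖F z‖)
    (hii : ∀ z ∈ U, c₁ * (V z - V ystar) ^ (1 - α₁) ≤ ‖gradient V z‖)
    (hiii : γ * (1 - α₁) < 1)
    (hc₂ : 0 < c₂) (hα₂ : α₂ ≤ 1)
    (hiv : ∀ z ∈ U, c₂ * (V z - V ystar) ^ (1 - α₂) ≤ ‖F z‖)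
    (hcase : α₂ / (1 - α₁) < γ) :
    ∃ n₀ : ℕ, ∀ n ≥ n₀,
      ‖y n - ystar‖ ≤
        (1 / (lam * c * c₁ ^ γ * (1 - γ * (1 - α₁)))) /
          ((V (y n₀) - V ystar) ^ (α₂ - γ * (1 - α₁)) +
              lam * c * c₁ ^ γ * c₂ * (γ * (1 - α₁) - α₂) * ∑ k ∈ Finset.Ico n₀ n, η k) ^
            ((1 - γ * (1 - α₁)) / (γ * (1 - α₁) - α₂)) :=
  abstract_convergence_rate_subexponential_general lam ηinit f1 f2 hlam hηinit hf1 hf2 F V hV hVdot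
    himp y η halg ystar hconv U hU γ α₁ c c₁ c₂ α₂ hγ hα₁ hc hc₁ hi hii hiii hc₂ hiv hcase
end

section
/- Under the hypotheses of the abstract convergence framework, let (y_n) be a bounded sequence generated by LCR or LCM converging to y* ∈ Z, and assume additionally that there exist c₂ > 0 and α₂ ≤ 1 with ‖F(y)‖ ≥ c₂·(V(y) − V(y*))^{1−α₂} for all y ∈ U. If α₂/(1−α₁) = γ, then the convergence is exponential: there exists n₀ ∈ ℕ such that for all n ≥ n₀: ‖y_n − y*‖ ≤ C₁·(V(y_{n₀}) − V(y*))^{1−γ(1−α₁)}·exp(−C₃·Σ_{k=n₀}^{n−1} η_k), where C₁ = 1/(λ·c·c₁^γ·(1−γ(1−α₁))) and C₃ = c₂/C₁. -/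
/-!
With `a k = V (y k) - V y*`, `θ = γ (1 - α₁)` and `L = λ c c₁^γ`, the Armijo condition together
with (i) and (ii) gives the sufficient decrease `a (k+1) ≤ a k - L (a k)^θ η_k ‖F (y k)‖` once
`y k ∈ U`. Weighted AM-GM (concavity of `t ↦ t^(1-θ)`) turns this into a bound of the step
length `η_k ‖F (y k)‖` by `C₁ ((a k)^(1-θ) - (a (k+1))^(1-θ))`, which telescopes to
`‖y n - y*‖ ≤ C₁ (a n)^(1-θ)`. When `α₂ = θ`, hypothesis (iv) turns the same decrease into
`a (k+1) ≤ (1 - L c₂ η_k) a k ≤ exp (-L c₂ η_k) a k`, and raising the resulting exponential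
decay of `a n` to the power `1 - θ` gives the rate, since `L c₂ (1 - θ) = c₂ / C₁`.
-/

open Filter

open Topology

theorem mul_le_rpow_sub_rpow_of_le_sub {a a' L s θ : ℝ} (hθ₀ : 0 ≤ θ) (hθ₁ : θ < 1) (ha : 0 < a)
    (ha' : 0 ≤ a') (h : a' ≤ a - L * a ^ θ * s) :
    L * (1 - θ) * s ≤ a ^ (1 - θ) - a' ^ (1 - θ) := by
  have hθa : 0 < a ^ θ := Real.rpow_pos_of_pos ha θ
  have hamgm : a ^ θ * a' ^ (1 - θ) ≤ θ * a + (1 - θ) * a' :=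
    Real.geom_mean_le_arith_mean2_weighted hθ₀ (by linarith) ha.le ha' (by ring)
  have hsplit : a ^ θ * a ^ (1 - θ) = a := by rw [← Real.rpow_add ha]; norm_num
  refine le_of_mul_le_mul_left ?_ hθa
  calc a ^ θ * (L * (1 - θ) * s) = (1 - θ) * (L * a ^ θ * s) := by ring
    _ ≤ (1 - θ) * (a - a') := by gcongr; linarith
    _ ≤ a - a ^ θ * a' ^ (1 - θ) := by linarith
    _ = a ^ θ * (a ^ (1 - θ) - a' ^ (1 - θ)) := by rw [mul_sub, hsplit]

theorem le_mul_exp_neg_of_le_sub_rpow {a a' L K s θ : ℝ} (ha : 0 ≤ a) (hL : 0 ≤ L)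
    (hs : K * a ^ (1 - θ) ≤ s) (h : a' ≤ a - L * a ^ θ * s) :
    a' ≤ a * Real.exp (-(L * K)) :=
  calc a' ≤ a - L * a ^ θ * s := h
    _ ≤ a - L * a ^ θ * (K * a ^ (1 - θ)) := by gcongr
    _ = a * (1 - L * K) := by
      rw [show L * a ^ θ * (K * a ^ (1 - θ)) = L * K * (a ^ θ * a ^ (1 - θ)) by ring,
        ← Real.rpow_add' ha (by norm_num)]
      simp only [add_sub_cancel, Real.rpow_one]
      ring
    _ ≤ a * Real.exp (-(L * K)) := by gcongr; linarith [Real.add_one_le_exp (-(L * K))]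

theorem le_mul_prod_Ico_of_le_mul {a r : ℕ → ℝ} {n₀ : ℕ} (hr : ∀ k ≥ n₀, 0 ≤ r k)
    (h : ∀ k ≥ n₀, a (k + 1) ≤ a k * r k) {n : ℕ} (hn : n₀ ≤ n) :
    a n ≤ a n₀ * ∏ k ∈ Finset.Ico n₀ n, r k := by
  induction n, hn using Nat.le_induction with
  | base => simp
  | succ n hn ih =>
    rw [Finset.prod_Ico_succ_top hn, ← mul_assoc]
    exact (h n hn).trans (mul_le_mul_of_nonneg_right ih (hr n hn))

theorem le_mul_exp_neg_sum_of_le_sub_rpow {a s η : ℕ → ℝ} {L K θ : ℝ} {n₀ : ℕ}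
    (ha : ∀ k, 0 ≤ a k) (hL : 0 ≤ L) (hs : ∀ k ≥ n₀, K * η k * a k ^ (1 - θ) ≤ s k)
    (h : ∀ k ≥ n₀, a (k + 1) ≤ a k - L * a k ^ θ * s k) {n : ℕ} (hn : n₀ ≤ n) :
    a n ≤ a n₀ * Real.exp (-(L * K) * ∑ k ∈ Finset.Ico n₀ n, η k) := by
  have := le_mul_prod_Ico_of_le_mul (fun k _ => (Real.exp_pos (-(L * (K * η k)))).le)
    (fun k hk => le_mul_exp_neg_of_le_sub_rpow (ha k) hL (hs k hk) (h k hk)) hn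
  simpa only [← Real.exp_sum, Finset.sum_neg_distrib, Finset.mul_sum, mul_assoc, neg_mul]
    using this

theorem dist_le_of_dist_succ_le_sub {X : Type*} [PseudoMetricSpace X] {x : ℕ → X} {x' : X}
    {φ : ℕ → ℝ} {n : ℕ} (hx : Tendsto x atTop (𝓝 x')) (hφ : ∀ k ≥ n, 0 ≤ φ k)
    (h : ∀ k ≥ n, dist (x k) (x (k + 1)) ≤ φ k - φ (k + 1)) :
    dist (x n) x' ≤ φ n := by
  refine le_of_tendsto (tendsto_const_nhds.dist hx) (eventually_atTop.2 ⟨n, fun N hN => ?_⟩)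
  calc dist (x n) (x N) ≤ ∑ k ∈ Finset.Ico n N, dist (x k) (x (k + 1)) :=
        dist_le_Ico_sum_dist x hN
    _ ≤ ∑ k ∈ Finset.Ico n N, -(φ (k + 1) - φ k) :=
        Finset.sum_le_sum fun k hk => by linarith [h k (Finset.mem_Ico.1 hk).1]
    _ = φ n - φ N := by rw [Finset.sum_neg_distrib, Finset.sum_Ico_sub φ hN, neg_sub]
    _ ≤ φ n := by linarith [hφ N hN]

section ArmijoIteration

variable {m : ℕ} {F : EuclideanSpace ℝ (Fin m) → EuclideanSpace ℝ (Fin m)}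
  {V : EuclideanSpace ℝ (Fin m) → ℝ} {lam : ℝ} {y : ℕ → EuclideanSpace ℝ (Fin m)} {η : ℕ → ℝ}

theorem eq_zero_of_lyapDeriv_eq_zero {z : EuclideanSpace ℝ (Fin m)} {γ c : ℝ} (hc : 0 < c)
    (himp : gradient V z = 0 → F z = 0)
    (hi : lyapDeriv F V z ≤ -c * ‖gradient V z‖ ^ γ * ‖F z‖) (h0 : lyapDeriv F V z = 0) :
    F z = 0 := by
  have hprod : ‖gradient V z‖ ^ γ * ‖F z‖ = 0 := by
    refine le_antisymm ?_ (by positivity)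
    nlinarith
  rcases mul_eq_zero.1 hprod with hgrad | hF
  · exact himp (norm_eq_zero.1 ((Real.rpow_eq_zero_iff_of_nonneg (norm_nonneg _)).1 hgrad).1)
  · exact norm_eq_zero.1 hF

structure IsArmijoIteration (F : EuclideanSpace ℝ (Fin m) → EuclideanSpace ℝ (Fin m))
    (V : EuclideanSpace ℝ (Fin m) → ℝ) (lam : ℝ) (y : ℕ → EuclideanSpace ℝ (Fin m))
    (η : ℕ → ℝ) : Prop where
  step_eq : ∀ n, y (n + 1) = y n + η n • F (y n)
  stepsize_pos : ∀ n, 0 < η n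
  armijo : ∀ n, armijoGap F V lam (y n) (η n) ≤ 0

theorem IsLCR.isArmijoIteration {ηinit f1 : ℝ} (h : IsLCR F V lam ηinit f1 y η)
    (hηinit : 0 < ηinit) (hf1 : 0 < f1) : IsArmijoIteration F V lam y η where
  step_eq n := (h n).1
  stepsize_pos n := by
    obtain ⟨p, hp, -⟩ := (h n).2
    rw [hp]
    positivity
  armijo n := by
    obtain ⟨p, -, hp, -⟩ := (h n).2
    exact hp

theorem IsLCM.isArmijoIteration {ηinit f1 f2 : ℝ} (h : IsLCM F V lam ηinit f1 f2 y η)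
    (hηinit : 0 < ηinit) (hf1 : 0 < f1) (hf2 : 0 < f2) : IsArmijoIteration F V lam y η where
  step_eq n := (h n).1
  stepsize_pos n := by
    induction n with
    | zero =>
      obtain ⟨p, hp, -⟩ := (h 0).2
      rw [hp, if_pos rfl]
      positivity
    | succ n ih =>
      obtain ⟨p, hp, -⟩ := (h (n + 1)).2
      rw [hp, if_neg n.succ_ne_zero, Nat.add_sub_cancel]
      positivity
  armijo n := by
    obtain ⟨p, -, hp, -⟩ := (h n).2
    exact hp

namespace IsArmijoIteration

variable (hit : IsArmijoIteration F V lam y η)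
include hit

theorem dist_succ (n : ℕ) : dist (y n) (y (n + 1)) = η n * ‖F (y n)‖ := by
  rw [hit.step_eq, dist_self_add_right, norm_smul, Real.norm_of_nonneg (hit.stepsize_pos n).le]

theorem sub_le (n : ℕ) : V (y (n + 1)) - V (y n) ≤ lam * η n * lyapDeriv F V (y n) := by
  have h := hit.armijo n
  rw [armijoGap, ← hit.step_eq n] at h
  linarith

theorem antitone (hlam : 0 < lam) (hVdot : ∀ z, lyapDeriv F V z ≤ 0) :
    Antitone fun n => V (y n) :=
  antitone_nat_of_succ_le fun n => by
    have := mul_nonpos_of_nonneg_of_nonpos (mul_pos hlam (hit.stepsize_pos n)).le (hVdot (y n))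
    linarith [hit.sub_le n]

theorem lyapDeriv_eq_zero_of_le (hlam : 0 < lam) (hVdot : ∀ z, lyapDeriv F V z ≤ 0) {n : ℕ}
    (h : V (y n) ≤ V (y (n + 1))) : lyapDeriv F V (y n) = 0 := by
  refine le_antisymm (hVdot _) (nonneg_of_mul_nonneg_right ?_ (mul_pos hlam (hit.stepsize_pos n)))
  linarith [hit.sub_le n]

theorem gap_succ_le (hlam : 0 < lam) {ystar : EuclideanSpace ℝ (Fin m)} {γ α₁ c c₁ : ℝ}
    (hγ : 0 ≤ γ) (hc : 0 ≤ c) (hc₁ : 0 ≤ c₁) {n : ℕ} (hgap : V ystar ≤ V (y n))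
    (hi : lyapDeriv F V (y n) ≤ -c * ‖gradient V (y n)‖ ^ γ * ‖F (y n)‖)
    (hii : c₁ * (V (y n) - V ystar) ^ (1 - α₁) ≤ ‖gradient V (y n)‖) :
    V (y (n + 1)) - V ystar ≤ V (y n) - V ystar -
      lam * c * c₁ ^ γ * (V (y n) - V ystar) ^ (γ * (1 - α₁)) * (η n * ‖F (y n)‖) := by
  have hgrad : c₁ ^ γ * (V (y n) - V ystar) ^ (γ * (1 - α₁)) ≤ ‖gradient V (y n)‖ ^ γ :=
    calc c₁ ^ γ * (V (y n) - V ystar) ^ (γ * (1 - α₁))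
        = (c₁ * (V (y n) - V ystar) ^ (1 - α₁)) ^ γ := by
          rw [Real.mul_rpow hc₁ (Real.rpow_nonneg (sub_nonneg.2 hgap) _),
            ← Real.rpow_mul (sub_nonneg.2 hgap), mul_comm γ]
      _ ≤ ‖gradient V (y n)‖ ^ γ := Real.rpow_le_rpow (by positivity) hii hγ
  have hη := (hit.stepsize_pos n).le
  calc V (y (n + 1)) - V ystar ≤ V (y n) - V ystar + lam * η n * lyapDeriv F V (y n) := by
        linarith [hit.sub_le n]
    _ ≤ V (y n) - V ystar - lam * η n * c * ‖gradient V (y n)‖ ^ γ * ‖F (y n)‖ := by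
        nlinarith [mul_le_mul_of_nonneg_left hi (mul_nonneg hlam.le hη)]
    _ ≤ V (y n) - V ystar -
          lam * η n * c * (c₁ ^ γ * (V (y n) - V ystar) ^ (γ * (1 - α₁))) * ‖F (y n)‖ := by
        gcongr
    _ = _ := by ring

theorem mul_norm_le_rpow_sub_rpow (hlam : 0 < lam) (hVdot : ∀ z, lyapDeriv F V z ≤ 0)
    {ystar : EuclideanSpace ℝ (Fin m)} {γ c L θ : ℝ} (hc : 0 < c) (hθ₀ : 0 ≤ θ) (hθ₁ : θ < 1)
    {n : ℕ} (hgap : V ystar ≤ V (y n)) (hgap' : V ystar ≤ V (y (n + 1)))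
    (himp : gradient V (y n) = 0 → F (y n) = 0)
    (hi : lyapDeriv F V (y n) ≤ -c * ‖gradient V (y n)‖ ^ γ * ‖F (y n)‖)
    (hdecr : V (y (n + 1)) - V ystar ≤
      V (y n) - V ystar - L * (V (y n) - V ystar) ^ θ * (η n * ‖F (y n)‖)) :
    L * (1 - θ) * (η n * ‖F (y n)‖) ≤
      (V (y n) - V ystar) ^ (1 - θ) - (V (y (n + 1)) - V ystar) ^ (1 - θ) := by
  rcases (sub_nonneg.2 hgap).eq_or_lt with h0 | hpos
  · have hstuck : V (y n) = V (y (n + 1)) :=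
      le_antisymm (by linarith) (hit.antitone hlam hVdot n.le_succ)
    have hF : F (y n) = 0 := eq_zero_of_lyapDeriv_eq_zero hc himp hi
      (hit.lyapDeriv_eq_zero_of_le hlam hVdot hstuck.le)
    rw [hF, ← hstuck]
    simp
  · exact mul_le_rpow_sub_rpow_of_le_sub hθ₀ hθ₁ hpos (sub_nonneg.2 hgap') hdecr

theorem norm_sub_le_rpow (hlam : 0 < lam) (hVdot : ∀ z, lyapDeriv F V z ≤ 0)
    {ystar : EuclideanSpace ℝ (Fin m)} (hconv : Tendsto y atTop (𝓝 ystar))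
    (himp : ∀ z, gradient V z = 0 → F z = 0) {γ c L θ : ℝ} (hc : 0 < c) (hL : 0 < L)
    (hθ₀ : 0 ≤ θ) (hθ₁ : θ < 1) (hgap : ∀ n, V ystar ≤ V (y n)) {n₀ : ℕ}
    (hi : ∀ k ≥ n₀, lyapDeriv F V (y k) ≤ -c * ‖gradient V (y k)‖ ^ γ * ‖F (y k)‖)
    (hdecr : ∀ k ≥ n₀, V (y (k + 1)) - V ystar ≤
      V (y k) - V ystar - L * (V (y k) - V ystar) ^ θ * (η k * ‖F (y k)‖))
    {n : ℕ} (hn : n₀ ≤ n) :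
    ‖y n - ystar‖ ≤ 1 / (L * (1 - θ)) * (V (y n) - V ystar) ^ (1 - θ) := by
  have hLθ : 0 < L * (1 - θ) := mul_pos hL (sub_pos.2 hθ₁)
  rw [← dist_eq_norm]
  refine dist_le_of_dist_succ_le_sub hconv
    (fun k _ => mul_nonneg (one_div_pos.2 hLθ).le (Real.rpow_nonneg (sub_nonneg.2 (hgap k)) _))
    fun k hk => ?_
  rw [hit.dist_succ, ← mul_sub, one_div_mul_eq_div, le_div_iff₀ hLθ, mul_comm]
  exact hit.mul_norm_le_rpow_sub_rpow hlam hVdot hc hθ₀ hθ₁ (hgap k) (hgap (k + 1)) (himp _)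
    (hi k (hn.trans hk)) (hdecr k (hn.trans hk))

end IsArmijoIteration

end ArmijoIteration

theorem abstract_convergence_rate_exponential_general
    {m : ℕ} (lam ηinit f1 f2 : ℝ)
    (hlam : lam ∈ Set.Ioo (0 : ℝ) 1) (hηinit : 0 < ηinit) (hf1 : 1 < f1) (hf2 : 1 < f2)
    (F : EuclideanSpace ℝ (Fin m) → EuclideanSpace ℝ (Fin m))
    (V : EuclideanSpace ℝ (Fin m) → ℝ)
    (hV : ContDiff ℝ 2 V)
    (hVdot : ∀ y, lyapDeriv F V y ≤ 0)
    (himp : ∀ y, gradient V y = 0 → F y = 0)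
    (y : ℕ → EuclideanSpace ℝ (Fin m)) (η : ℕ → ℝ)
    (halg : IsLCR F V lam ηinit f1 y η ∨ IsLCM F V lam ηinit f1 f2 y η)
    (ystar : EuclideanSpace ℝ (Fin m))
    (hconv : Tendsto y atTop (nhds ystar))
    (U : Set (EuclideanSpace ℝ (Fin m))) (hU : U ∈ nhds ystar)
    (γ α₁ c c₁ c₂ α₂ : ℝ)
    (hγ : 0 ≤ γ) (hα₁ : α₁ ∈ Set.Ioo (0 : ℝ) 1) (hc : 0 < c) (hc₁ : 0 < c₁)
    (hi : ∀ z ∈ U, lyapDeriv F V z ≤ -c * ‖gradient V z‖ ^ γ * ‖F z‖)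
    (hii : ∀ z ∈ U, c₁ * (V z - V ystar) ^ (1 - α₁) ≤ ‖gradient V z‖)
    (hiii : γ * (1 - α₁) < 1)
    (hiv : ∀ z ∈ U, c₂ * (V z - V ystar) ^ (1 - α₂) ≤ ‖F z‖)
    (hcase : α₂ / (1 - α₁) = γ) :
    ∃ n₀ : ℕ, ∀ n ≥ n₀,
      ‖y n - ystar‖ ≤
        (1 / (lam * c * c₁ ^ γ * (1 - γ * (1 - α₁)))) *
          (V (y n₀) - V ystar) ^ (1 - γ * (1 - α₁)) *
          Real.exp (-(c₂ / (1 / (lam * c * c₁ ^ γ * (1 - γ * (1 - α₁))))) *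
            ∑ k ∈ Finset.Ico n₀ n, η k) := by
  have hlam₀ := hlam.1
  have hit : IsArmijoIteration F V lam y η := halg.elim
    (·.isArmijoIteration hηinit (by linarith))
    (·.isArmijoIteration hηinit (by linarith) (by linarith))
  set θ := γ * (1 - α₁)
  set L := lam * c * c₁ ^ γ
  set C₁ := 1 / (L * (1 - θ))
  have hL : 0 < L := by positivity
  have hC₁ : 0 < C₁ := one_div_pos.2 (mul_pos hL (sub_pos.2 hiii))
  have hθ₀ : 0 ≤ θ := mul_nonneg hγ (sub_pos.2 hα₁.2).le
  have hα₂ : α₂ = θ := (div_eq_iff (sub_pos.2 hα₁.2).ne').1 hcase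
  have hgap : ∀ n, V ystar ≤ V (y n) :=
    (hit.antitone hlam₀ hVdot).le_of_tendsto ((hV.continuous.tendsto ystar).comp hconv)
  obtain ⟨n₀, hn₀⟩ := eventually_atTop.1 (hconv.eventually_mem hU)
  have hdecr (k : ℕ) (hk : k ≥ n₀) := hit.gap_succ_le hlam₀ hγ hc.le hc₁.le (hgap k)
    (hi _ (hn₀ k hk)) (hii _ (hn₀ k hk))
  have hforce (k : ℕ) (hk : k ≥ n₀) :
      c₂ * η k * (V (y k) - V ystar) ^ (1 - θ) ≤ η k * ‖F (y k)‖ := by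
    rw [mul_comm c₂, mul_assoc, ← hα₂]
    exact mul_le_mul_of_nonneg_left (hiv _ (hn₀ k hk)) (hit.stepsize_pos k).le
  have hdecay (n : ℕ) (hn : n ≥ n₀) :=
    le_mul_exp_neg_sum_of_le_sub_rpow (fun k => sub_nonneg.2 (hgap k)) hL.le hforce hdecr hn
  have hdist (n : ℕ) (hn : n ≥ n₀) := hit.norm_sub_le_rpow hlam₀ hVdot hconv himp hc hL hθ₀ hiii
    hgap (fun k hk => hi _ (hn₀ k hk)) hdecr hn
  refine ⟨n₀, fun n hn => (hdist n hn).trans ?_⟩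
  calc C₁ * (V (y n) - V ystar) ^ (1 - θ)
      ≤ C₁ * ((V (y n₀) - V ystar) * Real.exp (-(L * c₂) * ∑ k ∈ Finset.Ico n₀ n, η k)) ^ (1 - θ) :=
        mul_le_mul_of_nonneg_left
          (Real.rpow_le_rpow (sub_nonneg.2 (hgap n)) (hdecay n hn) (sub_pos.2 hiii).le) hC₁.le
    _ = _ := by
      rw [Real.mul_rpow (sub_nonneg.2 (hgap n₀)) (Real.exp_pos _).le, ← Real.exp_mul, mul_assoc,
        div_div_eq_mul_div, div_one]
      ring_nf

/-- **Exponential convergence rate** in the abstract convergence framework, in the case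
`α₂/(1−α₁) = γ`, with `C₁ = 1/(λ c c₁^γ (1−γ(1−α₁)))` and `C₃ = c₂/C₁`. -/
theorem abstract_convergence_rate_exponential
    {m : ℕ} (lam ηinit f1 f2 : ℝ)
    (hlam : lam ∈ Set.Ioo (0 : ℝ) 1) (hηinit : 0 < ηinit) (hf1 : 1 < f1) (hf2 : 1 < f2)
    (F : EuclideanSpace ℝ (Fin m) → EuclideanSpace ℝ (Fin m))
    (V : EuclideanSpace ℝ (Fin m) → ℝ)
    (hF : Continuous F) (hV : ContDiff ℝ 2 V) (hV0 : ∀ y, 0 ≤ V y)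
    (hVdot : ∀ y, lyapDeriv F V y ≤ 0)
    (himp : ∀ y, gradient V y = 0 → F y = 0)
    (y : ℕ → EuclideanSpace ℝ (Fin m)) (η : ℕ → ℝ)
    (halg : IsLCR F V lam ηinit f1 y η ∨ IsLCM F V lam ηinit f1 f2 y η)
    (hbdd : Bornology.IsBounded (Set.range y))
    (ystar : EuclideanSpace ℝ (Fin m)) (hZ : lyapDeriv F V ystar = 0)
    (hconv : Tendsto y atTop (nhds ystar))
    (U : Set (EuclideanSpace ℝ (Fin m))) (hU : U ∈ nhds ystar)
    (γ α₁ c c₁ c₂ α₂ : ℝ)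
    (hγ : 0 ≤ γ) (hα₁ : α₁ ∈ Set.Ioo (0 : ℝ) 1) (hc : 0 < c) (hc₁ : 0 < c₁)
    (hi : ∀ z ∈ U, lyapDeriv F V z ≤ -c * ‖gradient V z‖ ^ γ * ‖F z‖)
    (hii : ∀ z ∈ U, c₁ * (V z - V ystar) ^ (1 - α₁) ≤ ‖gradient V z‖)
    (hiii : γ * (1 - α₁) < 1)
    (hc₂ : 0 < c₂) (hα₂ : α₂ ≤ 1)
    (hiv : ∀ z ∈ U, c₂ * (V z - V ystar) ^ (1 - α₂) ≤ ‖F z‖)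
    (hcase : α₂ / (1 - α₁) = γ) :
    ∃ n₀ : ℕ, ∀ n ≥ n₀,
      ‖y n - ystar‖ ≤
        (1 / (lam * c * c₁ ^ γ * (1 - γ * (1 - α₁)))) *
          (V (y n₀) - V ystar) ^ (1 - γ * (1 - α₁)) *
          Real.exp (-(c₂ / (1 / (lam * c * c₁ ^ γ * (1 - γ * (1 - α₁))))) *
            ∑ k ∈ Finset.Ico n₀ n, η k) :=
  abstract_convergence_rate_exponential_general lam ηinit f1 f2 hlam hηinit hf1 hf2 F V hV hVdot
    himp y η halg ystar hconv U hU γ α₁ c c₁ c₂ α₂ hγ hα₁ hc hc₁ hi hii hiii hiv hcase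
end

section
/- Let (u_n) and (v_n) be sequences of nonnegative reals with u_n > 0 unless stated otherwise, let α ≥ 0, and assume u_{n+1} − u_n ≤ −v_n·u_n^α for all n ∈ ℕ. Then: (a) if α > 1, u_n ≤ 1 / [ u_0^{1−α} + (α−1)·Σ_{k=0}^{n−1} v_k ]^{1/(α−1)} for all n; (b) if α = 1, u_n ≤ u_0·exp(−Σ_{k=0}^{n−1} v_k) for all n; (c) if α < 1 and Σ_k v_k = +∞, then u_n = 0 for every n satisfying Σ_{k=0}^{n−1} v_k ≥ u_0^{1−α}/(1−α). -/
/-!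
If `F' = 1 / ψ` on `(0, ∞)` with `ψ` positive and nondecreasing, then `F` is concave, so its
tangent line at `u n` lies above it; evaluated at `u (n + 1) ≤ u n - v n ψ (u n)` this gives
`F (u (n + 1)) ≤ F (u n) - v n`, and telescoping `F (u n) ≤ F (u 0) - ∑_{k<n} v k` as long as
the sequence stays positive. For `ψ x = x ^ α` take `F x = x ^ (1 - α) / (1 - α)`, or `F = log`
when `α = 1`, and solve for `u n`. For `α < 1` the right-hand side becomes nonpositive while
`F (u n) > 0` for `u n > 0`, which forces `u n = 0`.
-/

open Filter Set

lemma ConcaveOn.le_add_mul_sub_of_hasDerivAt {S : Set ℝ} {f : ℝ → ℝ} {f' x y : ℝ}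
    (hfc : ConcaveOn ℝ S f) (hx : x ∈ S) (hy : y ∈ S) (hf : HasDerivAt f f' x) :
    f y ≤ f x + f' * (y - x) := by
  rcases lt_trichotomy y x with hyx | rfl | hxy
  · have h := hfc.le_slope_of_hasDerivAt hy hx hyx hf
    rw [slope_def_field, le_div_iff₀ (sub_pos.2 hyx)] at h
    linarith
  · simp
  · have h := hfc.slope_le_of_hasDerivAt hx hy hxy hf
    rw [slope_def_field, div_le_iff₀ (sub_pos.2 hxy)] at h
    linarith

section NonlinearGronwall

variable {ψ F : ℝ → ℝ}

lemma concaveOn_Ioi_of_hasDerivAt_inv (hψ_mono : MonotoneOn ψ (Ioi 0))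
    (hψ_pos : ∀ x > 0, 0 < ψ x) (hF : ∀ x > 0, HasDerivAt F (ψ x)⁻¹ x) :
    ConcaveOn ℝ (Ioi 0) F := by
  refine AntitoneOn.concaveOn_of_deriv (convex_Ioi 0)
    (fun x hx ↦ (hF x hx).continuousAt.continuousWithinAt) ?_ ?_ <;> rw [interior_Ioi]
  · exact fun x hx ↦ (hF x hx).differentiableAt.differentiableWithinAt
  · intro x hx y hy hxy
    rw [(hF x hx).deriv, (hF y hy).deriv]
    exact inv_anti₀ (hψ_pos x hx) (hψ_mono hx hy hxy)

lemma le_sub_of_sub_le_neg_mul (hψ_mono : MonotoneOn ψ (Ioi 0))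
    (hψ_pos : ∀ x > 0, 0 < ψ x) (hF : ∀ x > 0, HasDerivAt F (ψ x)⁻¹ x) {a b v : ℝ}
    (ha : 0 < a) (hb : 0 < b) (h : b - a ≤ -v * ψ a) :
    F b ≤ F a - v := by
  have hψa := hψ_pos a ha
  calc F b ≤ F a + (ψ a)⁻¹ * (b - a) :=
        (concaveOn_Ioi_of_hasDerivAt_inv hψ_mono hψ_pos hF).le_add_mul_sub_of_hasDerivAt
          ha hb (hF a ha)
    _ ≤ F a + (ψ a)⁻¹ * (-v * ψ a) := by gcongr
    _ = F a - v := by field_simp; ring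

lemma le_sub_sum_of_sub_le_neg_mul (hψ_mono : MonotoneOn ψ (Ioi 0))
    (hψ_pos : ∀ x > 0, 0 < ψ x) (hF : ∀ x > 0, HasDerivAt F (ψ x)⁻¹ x) {u v : ℕ → ℝ}
    (hrec : ∀ n, u (n + 1) - u n ≤ -v n * ψ (u n)) :
    ∀ n, (∀ k ≤ n, 0 < u k) → F (u n) ≤ F (u 0) - ∑ k ∈ Finset.range n, v k
  | 0, _ => by simp
  | n + 1, hpos => by
    have ih :=
      le_sub_sum_of_sub_le_neg_mul hψ_mono hψ_pos hF hrec n fun k hk ↦ hpos k (by omega)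
    have step := le_sub_of_sub_le_neg_mul hψ_mono hψ_pos hF (hpos n (by omega))
      (hpos (n + 1) le_rfl) (hrec n)
    rw [Finset.sum_range_succ]
    linarith

end NonlinearGronwall

section PowerGronwall

variable {u v : ℕ → ℝ} {α : ℝ}

lemma antitone_of_sub_le_neg_mul_rpow (hu : ∀ n, 0 ≤ u n) (hv : ∀ n, 0 ≤ v n)
    (hrec : ∀ n, u (n + 1) - u n ≤ -v n * u n ^ α) : Antitone u :=
  antitone_nat_of_succ_le fun n ↦ by
    have := mul_nonneg (hv n) (Real.rpow_nonneg (hu n) α)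
    linarith [hrec n]

lemma rpow_one_sub_div_le_of_sub_le_neg_mul_rpow (hu : ∀ n, 0 ≤ u n) (hv : ∀ n, 0 ≤ v n)
    (hα : 0 ≤ α) (hrec : ∀ n, u (n + 1) - u n ≤ -v n * u n ^ α) (hα1 : α ≠ 1) {n : ℕ}
    (hn : 0 < u n) :
    u n ^ (1 - α) / (1 - α) ≤ u 0 ^ (1 - α) / (1 - α) - ∑ k ∈ Finset.range n, v k := by
  have hα1' : 1 - α ≠ 0 := sub_ne_zero.2 hα1.symm
  refine le_sub_sum_of_sub_le_neg_mul (F := fun x ↦ x ^ (1 - α) / (1 - α))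
    ((Real.monotoneOn_rpow_Ici_of_exponent_nonneg hα).mono Ioi_subset_Ici_self)
    (fun x hx ↦ Real.rpow_pos_of_pos hx α) (fun x hx ↦ ?_) hrec n
    fun k hk ↦ hn.trans_le (antitone_of_sub_le_neg_mul_rpow hu hv hrec hk)
  have h := (Real.hasDerivAt_rpow_const (p := 1 - α) (Or.inl hx.ne')).div_const (1 - α)
  rwa [sub_sub_cancel_left, Real.rpow_neg hx.le, mul_div_cancel_left₀ _ hα1'] at h

lemma log_le_of_sub_le_neg_mul_rpow (hu : ∀ n, 0 ≤ u n) (hv : ∀ n, 0 ≤ v n)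
    (hrec : ∀ n, u (n + 1) - u n ≤ -v n * u n ^ α) (hα1 : α = 1) {n : ℕ} (hn : 0 < u n) :
    Real.log (u n) ≤ Real.log (u 0) - ∑ k ∈ Finset.range n, v k := by
  subst hα1
  refine le_sub_sum_of_sub_le_neg_mul
    ((Real.monotoneOn_rpow_Ici_of_exponent_nonneg zero_le_one).mono Ioi_subset_Ici_self)
    (fun x hx ↦ Real.rpow_pos_of_pos hx 1)
    (fun x hx ↦ by simpa using Real.hasDerivAt_log hx.ne') hrec n
    fun k hk ↦ hn.trans_le (antitone_of_sub_le_neg_mul_rpow hu hv hrec hk)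

lemma le_inv_rpow_of_sub_le_neg_mul_rpow (hu : ∀ n, 0 ≤ u n) (hv : ∀ n, 0 ≤ v n)
    (hrec : ∀ n, u (n + 1) - u n ≤ -v n * u n ^ α) (hα1 : 1 < α) (n : ℕ) :
    u n ≤
      ((u 0 ^ (1 - α) + (α - 1) * ∑ k ∈ Finset.range n, v k) ^ ((1 : ℝ) / (α - 1)))⁻¹ := by
  have hS : 0 ≤ ∑ k ∈ Finset.range n, v k := Finset.sum_nonneg fun k _ ↦ hv k
  have hX : 0 ≤ u 0 ^ (1 - α) + (α - 1) * ∑ k ∈ Finset.range n, v k :=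
    add_nonneg (Real.rpow_nonneg (hu 0) _) (mul_nonneg (by linarith) hS)
  rcases (hu n).eq_or_lt with hn | hn
  · rw [← hn]
    exact inv_nonneg.2 (Real.rpow_nonneg hX _)
  have hu0 : 0 < u 0 := hn.trans_le (antitone_of_sub_le_neg_mul_rpow hu hv hrec n.zero_le)
  have hneg : 1 - α < 0 := by linarith
  have h := rpow_one_sub_div_le_of_sub_le_neg_mul_rpow hu hv (by linarith) hrec hα1.ne' hn
  rw [div_le_iff_of_neg hneg, sub_mul, div_mul_cancel₀ _ hneg.ne] at h
  have hexp : -(1 / (α - 1)) = (1 - α)⁻¹ := by rw [one_div, ← inv_neg, neg_sub]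
  rw [← Real.rpow_neg (by positivity), hexp, Real.le_rpow_inv_iff_of_neg hn (by positivity) hneg]
  linarith

lemma le_mul_exp_of_sub_le_neg_mul_rpow (hu : ∀ n, 0 ≤ u n) (hv : ∀ n, 0 ≤ v n)
    (hrec : ∀ n, u (n + 1) - u n ≤ -v n * u n ^ α) (hα1 : α = 1) (n : ℕ) :
    u n ≤ u 0 * Real.exp (-∑ k ∈ Finset.range n, v k) := by
  rcases (hu n).eq_or_lt with hn | hn
  · rw [← hn]
    exact mul_nonneg (hu 0) (Real.exp_nonneg _)
  have hu0 : 0 < u 0 := hn.trans_le (antitone_of_sub_le_neg_mul_rpow hu hv hrec n.zero_le)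
  calc u n = Real.exp (Real.log (u n)) := (Real.exp_log hn).symm
    _ ≤ Real.exp (Real.log (u 0) - ∑ k ∈ Finset.range n, v k) :=
      Real.exp_le_exp.2 (log_le_of_sub_le_neg_mul_rpow hu hv hrec hα1 hn)
    _ = u 0 * Real.exp (-∑ k ∈ Finset.range n, v k) := by
      rw [sub_eq_add_neg, Real.exp_add, Real.exp_log hu0]

lemma eq_zero_of_sub_le_neg_mul_rpow (hu : ∀ n, 0 ≤ u n) (hv : ∀ n, 0 ≤ v n) (hα : 0 ≤ α)
    (hrec : ∀ n, u (n + 1) - u n ≤ -v n * u n ^ α) (hα1 : α < 1) {n : ℕ}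
    (hn : u 0 ^ (1 - α) / (1 - α) ≤ ∑ k ∈ Finset.range n, v k) :
    u n = 0 := by
  by_contra hne
  have hpos : 0 < u n := (hu n).lt_of_ne' hne
  have h := rpow_one_sub_div_le_of_sub_le_neg_mul_rpow hu hv hα hrec hα1.ne hpos
  have : 0 < u n ^ (1 - α) / (1 - α) := div_pos (Real.rpow_pos_of_pos hpos _) (by linarith)
  linarith

end PowerGronwall

/-- **Discrete Gronwall inequality for power nonlinearities.** If `(u_n)`, `(v_n)` are
nonnegative, `α ≥ 0` and `u_{n+1} − u_n ≤ −v_n u_n^α` for all `n`, then: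
(a) if `α > 1`, `u_n ≤ 1/[u_0^{1−α} + (α−1) Σ_{k<n} v_k]^{1/(α−1)}`;
(b) if `α = 1`, `u_n ≤ u_0 exp(−Σ_{k<n} v_k)`;
(c) if `α < 1` and `Σ v_k = ∞`, then `u_n = 0` whenever
`Σ_{k<n} v_k ≥ u_0^{1−α}/(1−α)`. -/
theorem discrete_gronwall_powers
    (u v : ℕ → ℝ) (hu : ∀ n, 0 ≤ u n) (hv : ∀ n, 0 ≤ v n)
    (α : ℝ) (hα : 0 ≤ α)
    (hrec : ∀ n, u (n + 1) - u n ≤ -(v n) * u n ^ α) :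
    (1 < α → ∀ n, u n ≤
      ((u 0 ^ (1 - α) + (α - 1) * ∑ k ∈ Finset.range n, v k) ^ ((1 : ℝ) / (α - 1)))⁻¹) ∧
    (α = 1 → ∀ n, u n ≤ u 0 * Real.exp (-∑ k ∈ Finset.range n, v k)) ∧
    (α < 1 → Tendsto (fun n => ∑ k ∈ Finset.range n, v k) atTop atTop →
      ∀ n, u 0 ^ (1 - α) / (1 - α) ≤ ∑ k ∈ Finset.range n, v k → u n = 0) :=
  ⟨le_inv_rpow_of_sub_le_neg_mul_rpow hu hv hrec, le_mul_exp_of_sub_le_neg_mul_rpow hu hv hrec,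
    fun hα1 _ _ ↦ eq_zero_of_sub_le_neg_mul_rpow hu hv hα hrec hα1⟩
end
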